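/- arXiv:2306.00847 — 5 statements merged into one kernel-verified Lean document; each statement's English description precedes it below -/
import Mathlib

section
/- Let m, n be positive integers. If A ∈ M_{m,n}(ℝ) is non-singular, then for any δ > 0 the set Bad_A(δ) has Lebesgue measure zero; consequently Bad_A = ⋃_{δ>0} Bad_A(δ) has Lebesgue measure zero. -/
/-!
Non-singularity of `A` yields arbitrarily large scales `X` at which the points `Aq mod ℤ^m`,
for `q` in a box of side `≍ X`, are `ε X^{-n/m}`-separated. The disjoint balls of radius
`≍ X^{-n/m}` around them then have total volume bounded below independently of `X`, so the limsup
of these unions is a set of positive measure of `ψ_δ`-approximable points.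

The same pigeonhole count shows that the countable group `Aℤ^n + ℤ^m` is dense: otherwise its
closure is a proper closed subgroup, hence null by Steinhaus' theorem, and the thin neighbourhoods
of a null compact set cannot hold the required volume of disjoint balls, which makes `A` singular.

Translation by `Aq₀ + p₀` maps approximations `q` of `b` to approximations `q + q₀` of
`b + Aq₀ + p₀`, losing only the factor `2^{n/m}` in `δ`. A set of positive measure translated by a
dense subgroup covers almost all of `ℝ^m` (Fubini and Steinhaus again), so the approximable set
is conull for every `δ > 0`.
-/

open MeasureTheory Filter

/-- Distance from `x ∈ ℝ^k` to the nearest integer vector, in the sup norm. -/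
noncomputable def intDist {k : ℕ} (x : Fin k → ℝ) : ℝ :=
  ⨅ p : Fin k → ℤ, ‖x - (fun i => (p i : ℝ))‖

/-- The set `W_A(ψ)` of `ψ`-approximable targets `b ∈ [0,1]^m` for `A`. -/
noncomputable def WA (m n : ℕ) (A : Matrix (Fin m) (Fin n) ℝ) (ψ : ℝ → ℝ) :
    Set (Fin m → ℝ) :=
  {b | b ∈ Set.Icc (0 : Fin m → ℝ) 1 ∧
    {q : Fin n → ℤ |
      intDist (A.mulVec (fun j => (q j : ℝ)) - b) < ψ ‖(fun j => (q j : ℝ))‖}.Infinite}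

/-- `A` is singular: for every `ε > 0` and all sufficiently large `X ≥ 1` there is
`q ∈ ℤ^n` with `‖Aq‖_ℤ < ε X^{-n/m}` and `0 < ‖q‖ < X`. -/
def Singular (m n : ℕ) (A : Matrix (Fin m) (Fin n) ℝ) : Prop :=
  ∀ ε : ℝ, 0 < ε → ∃ X₀ : ℝ, 1 ≤ X₀ ∧ ∀ X : ℝ, X₀ ≤ X →
    ∃ q : Fin n → ℤ,
      intDist (A.mulVec (fun j => (q j : ℝ))) < ε * X ^ (-(n : ℝ) / m) ∧
      0 < ‖(fun j => (q j : ℝ))‖ ∧ ‖(fun j => (q j : ℝ))‖ < X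

/-- `Bad_A(δ) = [0,1]^m ∖ W_A(ψ_δ)` where `ψ_δ(q) = δ q^{-n/m}`. -/
noncomputable def BadA (m n : ℕ) (A : Matrix (Fin m) (Fin n) ℝ) (δ : ℝ) :
    Set (Fin m → ℝ) :=
  Set.Icc (0 : Fin m → ℝ) 1 \ WA m n A (fun r => δ * r ^ (-(n : ℝ) / m))



open Topology Metric
open scoped ENNReal Pointwise Matrix

section IntDist

variable {k : ℕ}

theorem intDist_le_norm_sub (x : Fin k → ℝ) (p : Fin k → ℤ) :
    intDist x ≤ ‖x - fun i => (p i : ℝ)‖ :=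
  ciInf_le ⟨0, by rintro _ ⟨p, rfl⟩; exact norm_nonneg _⟩ p

theorem intDist_sub_intCast (x : Fin k → ℝ) (p : Fin k → ℤ) :
    intDist (x - fun i => (p i : ℝ)) = intDist x := by
  simp only [intDist]
  rw [← (Equiv.addRight p).iInf_comp (g := fun p' => ‖x - fun i => (p' i : ℝ)‖)]
  congr 1 with p'
  congr 1
  ext i
  simp only [Pi.sub_apply, Equiv.coe_addRight, Pi.add_apply, Int.cast_add]
  ring

theorem intDist_sub_le_dist (x y : Fin k → ℝ) (p p' : Fin k → ℤ) :
    intDist (x - y) ≤ dist (x - fun i => (p i : ℝ)) (y - fun i => (p' i : ℝ)) := by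
  refine (intDist_le_norm_sub _ (p - p')).trans_eq ?_
  rw [dist_eq_norm]
  congr 1
  ext i
  simp only [Pi.sub_apply, Int.cast_sub]
  ring

noncomputable def vecFract (x : Fin k → ℝ) : Fin k → ℝ := fun i => Int.fract (x i)

theorem vecFract_eq_sub (x : Fin k → ℝ) : vecFract x = x - fun i => ((⌊x i⌋ : ℤ) : ℝ) := rfl

theorem norm_vecFract_le (x : Fin k → ℝ) : ‖vecFract x‖ ≤ 1 :=
  (pi_norm_le_iff_of_nonneg zero_le_one).2 fun i => by
    rw [vecFract, Real.norm_of_nonneg (Int.fract_nonneg _)]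
    exact (Int.fract_lt_one _).le

theorem intDist_sub_le_dist_vecFract (x y : Fin k → ℝ) :
    intDist (x - y) ≤ dist (vecFract x) (vecFract y) :=
  intDist_sub_le_dist x y _ _

theorem intDist_sub_le_dist_vecFract_left (x y : Fin k → ℝ) :
    intDist (x - y) ≤ dist (vecFract x) y := by
  refine (intDist_sub_le_dist x y (fun i => ⌊x i⌋) 0).trans_eq ?_
  rw [vecFract_eq_sub]
  congr 1
  ext i
  simp

end IntDist

section IntVectors

variable {k : ℕ}

theorem norm_intCast_vec (q : Fin k → ℤ) : ‖fun j => (q j : ℝ)‖ = ‖q‖ := by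
  simp only [Pi.norm_def]
  congr 2

theorem infinite_iff_forall_exists_lt_norm {s : Set (Fin k → ℤ)} :
    s.Infinite ↔ ∀ C : ℝ, ∃ q ∈ s, C < ‖q‖ := by
  refine ⟨fun hs C => ?_, fun h hs => ?_⟩
  · by_contra! hC
    exact hs ((isCompact_closedBall (0 : Fin k → ℤ) C).finite_of_discrete.subset
      fun q hq => mem_closedBall_zero_iff.2 (hC q hq))
  · obtain ⟨C, hC⟩ := isBounded_iff_forall_norm_le.1 hs.isBounded
    obtain ⟨q, hq, hCq⟩ := h C
    exact (hC q hq).not_gt hCq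

noncomputable def box (n N : ℕ) : Finset (Fin n → ℤ) :=
  Fintype.piFinset fun _ => Finset.Ioc (N : ℤ) (2 * N)

variable {n N : ℕ} {q q' : Fin n → ℤ}

theorem card_box : (box n N).card = N ^ n := by
  simp [box, Int.card_Ioc, two_mul]

theorem norm_le_of_mem_box (hq : q ∈ box n N) : ‖q‖ ≤ 2 * N := by
  refine (pi_norm_le_iff_of_nonneg (by positivity)).2 fun i => ?_
  have hi := Finset.mem_Ioc.1 (Fintype.mem_piFinset.1 hq i)
  rw [Int.norm_eq_abs, abs_le]
  constructor <;> norm_cast <;> omega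

theorem lt_norm_of_mem_box (hn : 0 < n) (hq : q ∈ box n N) : (N : ℝ) < ‖q‖ := by
  have hi := Finset.mem_Ioc.1 (Fintype.mem_piFinset.1 hq ⟨0, hn⟩)
  calc (N : ℝ) < q ⟨0, hn⟩ := by exact_mod_cast hi.1
    _ ≤ ‖q ⟨0, hn⟩‖ := by rw [Int.norm_eq_abs]; exact le_abs_self _
    _ ≤ ‖q‖ := norm_le_pi_norm q _

theorem norm_sub_le_of_mem_box (hq : q ∈ box n N) (hq' : q' ∈ box n N) : ‖q - q'‖ ≤ N := by
  refine (pi_norm_le_iff_of_nonneg (by positivity)).2 fun i => ?_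
  have hi := Finset.mem_Ioc.1 (Fintype.mem_piFinset.1 hq i)
  have hi' := Finset.mem_Ioc.1 (Fintype.mem_piFinset.1 hq' i)
  rw [Pi.sub_apply, Int.norm_eq_abs, abs_le]
  constructor <;> norm_cast <;> omega

end IntVectors

section Steinhaus

variable {E : Type*} [NormedAddCommGroup E] [NormedSpace ℝ E] [FiniteDimensional ℝ E]
  [MeasurableSpace E] [BorelSpace E] (μ : Measure E) [μ.IsAddHaarMeasure]

theorem exists_measure_inter_preimage_add_ne_zero {S T : Set E} (hS : MeasurableSet S)
    (hT : MeasurableSet T) (hS0 : μ S ≠ 0) (hT0 : μ T ≠ 0) :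
    ∃ t, μ (S ∩ (· + t) ⁻¹' T) ≠ 0 := by
  by_contra! h
  have hST : ∫⁻ t, μ (S ∩ (· + t) ⁻¹' T) ∂μ = μ S * μ T :=
    calc ∫⁻ t, μ (S ∩ (· + t) ⁻¹' T) ∂μ
        = ∫⁻ t, ∫⁻ x, S.indicator 1 x * T.indicator 1 (x + t) ∂μ ∂μ := by
          congr 1 with t
          rw [← lintegral_indicator_one (hS.inter (hT.preimage (measurable_add_const t)))]
          congr 1 with x
          by_cases hx : x ∈ S <;> by_cases hxt : x + t ∈ T <;> simp [Set.indicator, hx, hxt]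
      _ = ∫⁻ x, ∫⁻ t, S.indicator 1 x * T.indicator 1 (x + t) ∂μ ∂μ :=
          lintegral_lintegral_swap (by fun_prop (disch := measurability))
      _ = ∫⁻ x, S.indicator 1 x * μ T ∂μ := by
          congr 1 with x
          rw [lintegral_const_mul' _ _ (by simp [Set.indicator]; split_ifs <;> simp),
            lintegral_add_left_eq_self (fun t => T.indicator 1 t) x, lintegral_indicator_one hT]
      _ = μ S * μ T := by
          rw [lintegral_mul_const _ (measurable_one.indicator hS), lintegral_indicator_one hS]
  simp only [h, MeasureTheory.lintegral_zero] at hST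
  exact mul_ne_zero hS0 hT0 hST.symm

theorem exists_add_mem_of_dense {D : Set E} (hD : Dense D) {S T : Set E} (hS : MeasurableSet S)
    (hT : MeasurableSet T) (hS0 : μ S ≠ 0) (hT0 : μ T ≠ 0) :
    ∃ x ∈ S, ∃ d ∈ D, x + d ∈ T := by
  obtain ⟨t, ht⟩ := exists_measure_inter_preimage_add_ne_zero μ hS hT hS0 hT0
  set F := S ∩ (· + t) ⁻¹' T
  have hF : F - F ∈ 𝓝 0 := Measure.sub_mem_nhds_zero_of_addHaar_pos μ F
    (hS.inter (hT.preimage (measurable_add_const t))) (pos_iff_ne_zero.2 ht)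
  have hFt : (· - t) ⁻¹' (F - F) ∈ 𝓝 t :=
    (continuous_sub_right t).continuousAt.preimage_mem_nhds (by rwa [sub_self])
  obtain ⟨d, hdD, e, ⟨-, heT⟩, e', ⟨he'S, -⟩, hd⟩ := hD.inter_nhds_nonempty hFt
  refine ⟨e', he'S, d, hdD, ?_⟩
  simp only at hd
  convert Set.mem_preimage.1 heT using 1
  rw [eq_add_of_sub_eq hd.symm]
  abel

theorem ae_exists_add_mem_of_dense {D : Set E} (hD : Dense D) (hDc : D.Countable)
    {S : Set E} (hS : MeasurableSet S) (hS0 : μ S ≠ 0) :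
    ∀ᵐ x ∂μ, ∃ d ∈ D, x + d ∈ S := by
  have hC : MeasurableSet {x | ¬∃ d ∈ D, x + d ∈ S} := by
    convert (MeasurableSet.biUnion hDc fun d _ => hS.preimage (measurable_add_const d)).compl
      using 1
    ext
    simp
  rw [ae_iff]
  by_contra hC0
  obtain ⟨x, hx, d, hd, hxd⟩ := exists_add_mem_of_dense μ hD hC hS hC0 hS0
  exact hx ⟨d, hd, hxd⟩

theorem AddSubgroup.dense_of_addHaar_closure_ne_zero (H : AddSubgroup E)
    (hH : μ (_root_.closure (H : Set E)) ≠ 0) : Dense (H : Set E) := by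
  set K := H.topologicalClosure
  have hK : (K : Set E) ∈ 𝓝 0 := Filter.mem_of_superset
    (Measure.sub_mem_nhds_zero_of_addHaar_pos μ _ H.isClosed_topologicalClosure.measurableSet
      (pos_iff_ne_zero.2 (by rwa [H.topologicalClosure_coe])))
    (by rintro _ ⟨x, hx, y, hy, rfl⟩; exact K.sub_mem hx hy)
  have hopen := K.isOpen_of_mem_nhds hK
  rw [dense_iff_closure_eq, ← H.topologicalClosure_coe]
  exact IsClopen.eq_univ ⟨H.isClosed_topologicalClosure, hopen⟩ ⟨0, K.zero_mem⟩

end Steinhaus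

theorem le_measure_limsup_atTop {α : Type*} [MeasurableSpace α] {μ : Measure α} {s : ℕ → Set α}
    {c : ℝ≥0∞} (hs : ∀ i, MeasurableSet (s i)) (hfin : μ (⋃ i, s i) ≠ ∞)
    (hc : ∀ i, c ≤ μ (s i)) : c ≤ μ (limsup s atTop) := by
  have hanti : Antitone fun N : ℕ => ⋃ i ≥ N, s i :=
    fun N N' h => Set.biUnion_mono (fun i hi => h.trans hi) fun _ _ => le_rfl
  rw [limsup_eq_iInf_iSup_of_nat]
  simp only [Set.iInf_eq_iInter, Set.iSup_eq_iUnion]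
  rw [Antitone.measure_iInter hanti
    (fun N => (MeasurableSet.biUnion (Set.to_countable _) fun i _ => hs i).nullMeasurableSet)
    ⟨0, ne_top_of_le_ne_top hfin
      (measure_mono (Set.iUnion₂_subset fun i _ => Set.subset_iUnion s i))⟩]
  exact le_iInf fun N => (hc N).trans (measure_mono (Set.subset_biUnion_of_mem (le_refl N)))

theorem neg_natCast_div_natCast_nonpos (m n : ℕ) : -(n : ℝ) / m ≤ 0 :=
  div_nonpos_of_nonpos_of_nonneg (neg_nonpos.2 n.cast_nonneg) m.cast_nonneg

theorem rpow_le_two_rpow_neg_mul {a b e : ℝ} (hb : 0 < b) (hba : b ≤ 2 * a) (he : e ≤ 0) :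
    a ^ e ≤ 2 ^ (-e) * b ^ e :=
  calc a ^ e ≤ (b / 2) ^ e := Real.rpow_le_rpow_of_nonpos (half_pos hb) (by linarith) he
    _ = 2 ^ (-e) * b ^ e := by
      rw [Real.div_rpow hb.le zero_le_two, Real.rpow_neg zero_le_two, div_eq_inv_mul]

section Diophantine

variable {m n : ℕ} (A : Matrix (Fin m) (Fin n) ℝ)

theorem ofReal_div_four_pow_le (hm : 0 < m) {X c : ℝ} (hX : 4 ≤ X) (hc : 0 ≤ c) :
    ENNReal.ofReal ((2 * c) ^ m / 4 ^ n) ≤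
      (⌊X / 2⌋₊ : ℝ≥0∞) ^ n * ENNReal.ofReal ((2 * (c * X ^ (-(n : ℝ) / m))) ^ m) := by
  have hX0 : 0 < X := by linarith
  have hXe : (X ^ (-(n : ℝ) / m)) ^ m = (X ^ n)⁻¹ := by
    rw [← Real.rpow_natCast, ← Real.rpow_mul hX0.le, div_mul_cancel₀ _ (by positivity),
      Real.rpow_neg hX0.le, Real.rpow_natCast]
  have hN : X / 4 ≤ ⌊X / 2⌋₊ := by linarith [Nat.sub_one_lt_floor (X / 2)]
  rw [← ENNReal.ofReal_natCast, ← ENNReal.ofReal_pow (Nat.cast_nonneg _),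
    ← ENNReal.ofReal_mul (by positivity)]
  refine ENNReal.ofReal_le_ofReal ?_
  calc (2 * c) ^ m / 4 ^ n = (X / 4) ^ n * ((2 * c) ^ m * (X ^ n)⁻¹) := by
        rw [div_pow]
        field_simp
    _ ≤ (⌊X / 2⌋₊ : ℝ) ^ n * ((2 * c) ^ m * (X ^ n)⁻¹) := by gcongr
    _ = _ := by simp only [mul_pow, hXe]; ring

theorem exists_intDist_sub_le_or_volume_biUnion_eq {ι : Type*} (s : Finset ι)
    (x : ι → Fin m → ℝ) {ρ : ℝ} (hρ : 0 ≤ ρ) :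
    (∃ i ∈ s, ∃ j ∈ s, i ≠ j ∧ intDist (x i - x j) ≤ 2 * ρ) ∨
      volume (⋃ i ∈ s, closedBall (vecFract (x i)) ρ) = s.card * ENNReal.ofReal ((2 * ρ) ^ m) := by
  refine or_iff_not_imp_left.2 fun h => ?_
  push Not at h
  have hdisj : (s : Set ι).PairwiseDisjoint fun i => closedBall (vecFract (x i)) ρ :=
    fun i hi j hj hij => closedBall_disjoint_closedBall <| by
      linarith [h i hi j hj hij, intDist_sub_le_dist_vecFract (x i) (x j)]
  rw [measure_biUnion_finset hdisj fun i _ => measurableSet_closedBall,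
    Finset.sum_congr rfl fun i _ => Real.volume_pi_closedBall _ hρ, Finset.sum_const,
    nsmul_eq_mul, Fintype.card_fin]

noncomputable def fractBalls (N : ℕ) (ρ : ℝ) : Set (Fin m → ℝ) :=
  ⋃ q ∈ box n N, closedBall (vecFract (A *ᵥ fun j => (q j : ℝ))) ρ

theorem exists_intDist_mulVec_le_or_volume_fractBalls_eq (N : ℕ) {ρ : ℝ} (hρ : 0 ≤ ρ) :
    (∃ q : Fin n → ℤ, q ≠ 0 ∧ ‖q‖ ≤ N ∧ intDist (A *ᵥ fun j => (q j : ℝ)) ≤ 2 * ρ) ∨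
      volume (fractBalls A N ρ) = (N : ℝ≥0∞) ^ n * ENNReal.ofReal ((2 * ρ) ^ m) := by
  rcases exists_intDist_sub_le_or_volume_biUnion_eq (box n N)
    (fun q => A *ᵥ fun j => (q j : ℝ)) hρ with ⟨q, hq, q', hq', hne, hle⟩ | h
  · refine Or.inl ⟨q - q', sub_ne_zero.2 hne, norm_sub_le_of_mem_box hq hq', ?_⟩
    convert hle using 2
    rw [← Matrix.mulVec_sub]
    congr 1
    ext j
    simp
  · right
    rw [fractBalls, h, card_box]
    push_cast
    rfl

theorem singular_iff : Singular m n A ↔ ∀ ε : ℝ, 0 < ε → ∀ᶠ X in atTop, ∃ q : Fin n → ℤ,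
    intDist (A *ᵥ fun j => (q j : ℝ)) < ε * X ^ (-(n : ℝ) / m) ∧ q ≠ 0 ∧ ‖q‖ < X := by
  simp only [Singular, eventually_atTop, norm_intCast_vec, norm_pos_iff]
  exact forall₂_congr fun ε hε => ⟨fun ⟨X₀, _, h⟩ => ⟨X₀, h⟩,
    fun ⟨X₀, h⟩ => ⟨max X₀ 1, le_max_right _ _, fun X hX => h X (le_of_max_le_left hX)⟩⟩

noncomputable def shiftGroup : AddSubgroup (Fin m → ℝ) :=
  (((Matrix.mulVecLin A).toAddMonoidHom.comp ((Int.castAddHom ℝ).compLeft (Fin n))).coprod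
    ((Int.castAddHom ℝ).compLeft (Fin m))).range

theorem mem_shiftGroup {x : Fin m → ℝ} : x ∈ shiftGroup A ↔
    ∃ (q : Fin n → ℤ) (p : Fin m → ℤ), A *ᵥ (fun j => (q j : ℝ)) + (fun i => (p i : ℝ)) = x := by
  simp only [shiftGroup, AddMonoidHom.mem_range, Prod.exists]
  rfl

theorem countable_shiftGroup : (shiftGroup A : Set (Fin m → ℝ)).Countable := by
  rw [shiftGroup, AddMonoidHom.coe_range]
  exact Set.countable_range _

theorem vecFract_mem_shiftGroup (q : Fin n → ℤ) :
    vecFract (A *ᵥ fun j => (q j : ℝ)) ∈ shiftGroup A := by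
  refine (mem_shiftGroup A).2 ⟨q, fun i => -⌊(A *ᵥ fun j => (q j : ℝ)) i⌋, ?_⟩
  rw [vecFract_eq_sub]
  ext i
  simp [sub_eq_add_neg]

theorem singular_of_volume_closure_shiftGroup_eq_zero (hm : 0 < m) (hn : 0 < n)
    (hK : volume (closure (shiftGroup A : Set (Fin m → ℝ))) = 0) : Singular m n A := by
  set K₀ := closure (shiftGroup A : Set (Fin m → ℝ)) ∩ closedBall 0 1
  have hthick : Tendsto (fun r => volume (cthickening r K₀)) (𝓝 0) (𝓝 0) := by
    have h := tendsto_measure_cthickening_of_isCompact (μ := volume) (s := K₀)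
      ((isCompact_closedBall 0 1).inter_left isClosed_closure)
    rwa [measure_mono_null Set.inter_subset_left hK] at h
  rw [singular_iff]
  intro ε hε
  have hρ : Tendsto (fun X : ℝ => ε / 3 * X ^ (-(n : ℝ) / m)) atTop (𝓝 0) := by
    simpa [neg_div] using (tendsto_rpow_neg_atTop
      (div_pos (Nat.cast_pos.2 hn) (Nat.cast_pos.2 hm))).const_mul (ε / 3)
  have hκ : 0 < ENNReal.ofReal ((2 * (ε / 3)) ^ m / 4 ^ n) := ENNReal.ofReal_pos.2 (by positivity)
  filter_upwards [(hthick.comp hρ).eventually (gt_mem_nhds hκ), eventually_ge_atTop 4]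
    with X hvol hX
  have hXe : 0 < X ^ (-(n : ℝ) / m) := Real.rpow_pos_of_pos (by linarith) _
  rcases exists_intDist_mulVec_le_or_volume_fractBalls_eq A ⌊X / 2⌋₊
    (by positivity : 0 ≤ ε / 3 * X ^ (-(n : ℝ) / m)) with ⟨q, hq0, hqN, hq⟩ | heq
  · refine ⟨q, hq.trans_lt (by nlinarith), hq0, hqN.trans_lt ?_⟩
    linarith [Nat.floor_le (by linarith : 0 ≤ X / 2)]
  · have hsub : fractBalls A ⌊X / 2⌋₊ (ε / 3 * X ^ (-(n : ℝ) / m)) ⊆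
        cthickening (ε / 3 * X ^ (-(n : ℝ) / m)) K₀ :=
      Set.iUnion₂_subset fun q _ => closedBall_subset_cthickening (E := K₀)
        ⟨subset_closure (vecFract_mem_shiftGroup A q),
          mem_closedBall_zero_iff.2 (norm_vecFract_le _)⟩ _
    exact absurd hvol (not_lt.2 <| (ofReal_div_four_pow_le hm hX (by positivity)).trans
      (heq ▸ measure_mono hsub))

theorem dense_shiftGroup (hm : 0 < m) (hn : 0 < n) (hA : ¬ Singular m n A) :
    Dense (shiftGroup A : Set (Fin m → ℝ)) := by
  contrapose! hA
  refine singular_of_volume_closure_shiftGroup_eq_zero A hm hn ?_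
  by_contra hK
  exact hA ((shiftGroup A).dense_of_addHaar_closure_ne_zero volume hK)

theorem exists_frequently_le_intDist (hA : ¬ Singular m n A) :
    ∃ ε : ℝ, 0 < ε ∧ ∃ᶠ X in atTop, ∀ q : Fin n → ℤ, q ≠ 0 → ‖q‖ < X →
      ε * X ^ (-(n : ℝ) / m) ≤ intDist (A *ᵥ fun j => (q j : ℝ)) := by
  simp only [singular_iff, not_forall, Filter.not_eventually, not_exists, not_and] at hA
  obtain ⟨ε, hε, h⟩ := hA
  exact ⟨ε, hε, h.mono fun X hX q hq0 hqX => not_lt.1 fun hlt => hX q hlt hq0 hqX⟩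

end Diophantine

section Approximation

variable {m n : ℕ} (A : Matrix (Fin m) (Fin n) ℝ)

noncomputable def approxSet (δ : ℝ) : Set (Fin m → ℝ) :=
  {b | {q : Fin n → ℤ |
    intDist (A *ᵥ (fun j => (q j : ℝ)) - b) < δ * ‖q‖ ^ (-(n : ℝ) / m)}.Infinite}

theorem BadA_eq (δ : ℝ) : BadA m n A δ = Set.Icc 0 1 \ approxSet A δ := by
  ext b
  simp only [BadA, WA, approxSet, norm_intCast_vec, Set.mem_sdiff, Set.mem_ofPred_eq]
  tauto

theorem approxSet_mono : Monotone (approxSet A) := fun _ _ h _ hb =>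
  hb.mono fun _ hq =>
    hq.trans_le (mul_le_mul_of_nonneg_right h (Real.rpow_nonneg (norm_nonneg _) _))

theorem BadA_antitone : Antitone (BadA m n A) := fun δ δ' h => by
  rw [BadA_eq, BadA_eq]
  exact Set.sdiff_subset_sdiff_right (approxSet_mono A h)

theorem add_mem_approxSet {δ : ℝ} (hδ : 0 ≤ δ) {y g : Fin m → ℝ} (hy : y ∈ approxSet A δ)
    (hg : g ∈ shiftGroup A) : y + g ∈ approxSet A (2 ^ ((n : ℝ) / m) * δ) := by
  obtain ⟨q₀, p₀, rfl⟩ := (mem_shiftGroup A).1 hg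
  refine ((hy.sdiff (isCompact_closedBall (0 : Fin n → ℤ) ‖q₀‖).finite_of_discrete).image
    (add_left_injective q₀).injOn).mono ?_
  rintro _ ⟨q, ⟨hq, hq₀⟩, rfl⟩
  have hq₀ : ‖q₀‖ < ‖q‖ := by simpa using hq₀
  have hpos : 0 < ‖q + q₀‖ := by
    have h := norm_sub_le (q + q₀) q₀
    rw [add_sub_cancel_right] at h
    linarith
  have hle : ‖q + q₀‖ ≤ 2 * ‖q‖ := by linarith [norm_add_le q q₀]
  have hshift : A *ᵥ (fun j => ((q + q₀) j : ℝ)) - (y + (A *ᵥ (fun j => (q₀ j : ℝ)) +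
      fun i => (p₀ i : ℝ))) = (A *ᵥ (fun j => (q j : ℝ)) - y) - fun i => (p₀ i : ℝ) := by
    have : (fun j => ((q + q₀) j : ℝ)) = (fun j => (q j : ℝ)) + fun j => (q₀ j : ℝ) := by
      ext j
      simp
    rw [this, Matrix.mulVec_add]
    abel
  show intDist _ < _
  calc _ = intDist (A *ᵥ (fun j => (q j : ℝ)) - y) := by rw [hshift, intDist_sub_intCast]
    _ < δ * ‖q‖ ^ (-(n : ℝ) / m) := hq
    _ ≤ δ * (2 ^ (-(-(n : ℝ) / m)) * ‖q + q₀‖ ^ (-(n : ℝ) / m)) :=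
      mul_le_mul_of_nonneg_left
        (rpow_le_two_rpow_neg_mul hpos hle (neg_natCast_div_natCast_nonpos m n)) hδ
    _ = 2 ^ ((n : ℝ) / m) * δ * ‖q + q₀‖ ^ (-(n : ℝ) / m) := by rw [neg_div, neg_neg]; ring

theorem le_volume_fractBalls (hm : 0 < m) {ε c X : ℝ} (hc : 0 ≤ c) (hcε : 2 * c < ε)
    (hX : 4 ≤ X) (hsep : ∀ q : Fin n → ℤ, q ≠ 0 → ‖q‖ < X →
      ε * X ^ (-(n : ℝ) / m) ≤ intDist (A *ᵥ fun j => (q j : ℝ))) :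
    ENNReal.ofReal ((2 * c) ^ m / 4 ^ n) ≤
      volume (fractBalls A ⌊X / 2⌋₊ (c * X ^ (-(n : ℝ) / m))) := by
  have hXe : 0 < X ^ (-(n : ℝ) / m) := Real.rpow_pos_of_pos (by linarith) _
  rcases exists_intDist_mulVec_le_or_volume_fractBalls_eq A ⌊X / 2⌋₊
    (by positivity : 0 ≤ c * X ^ (-(n : ℝ) / m)) with ⟨q, hq0, hqN, hq⟩ | heq
  · have hqX : ‖q‖ < X := hqN.trans_lt (by linarith [Nat.floor_le (by linarith : 0 ≤ X / 2)])
    nlinarith [hsep q hq0 hqX]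
  · exact heq ▸ ofReal_div_four_pow_le hm hX hc

theorem mem_approxSet_of_frequently_mem_fractBalls (hn : 0 < n) {X : ℕ → ℝ}
    (hX : Tendsto X atTop atTop) {c δ : ℝ} (hc : 0 ≤ c) (hcδ : c < δ) {b : Fin m → ℝ}
    (hb : ∃ᶠ i in atTop, b ∈ fractBalls A ⌊X i / 2⌋₊ (c * X i ^ (-(n : ℝ) / m))) :
    b ∈ approxSet A δ := by
  refine infinite_iff_forall_exists_lt_norm.2 fun C => ?_
  obtain ⟨i, hbi, hXi, hXi0⟩ := (hb.and_eventually ((hX.eventually_ge_atTop (2 * C + 2)).and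
    (hX.eventually_ge_atTop 0))).exists
  obtain ⟨q, hq, hbq⟩ := Set.mem_iUnion₂.1 hbi
  have hNq := lt_norm_of_mem_box hn hq
  have hN := Nat.floor_le (by linarith : 0 ≤ X i / 2)
  have hq0 : 0 < ‖q‖ := lt_of_le_of_lt (Nat.cast_nonneg _) hNq
  have hqX : ‖q‖ ≤ X i := (norm_le_of_mem_box hq).trans (by linarith)
  refine ⟨q, ?_, by linarith [Nat.sub_one_lt_floor (X i / 2)]⟩
  calc intDist (A *ᵥ (fun j => (q j : ℝ)) - b)
      ≤ dist (vecFract (A *ᵥ fun j => (q j : ℝ))) b := intDist_sub_le_dist_vecFract_left _ _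
    _ ≤ c * X i ^ (-(n : ℝ) / m) := by rw [dist_comm]; exact mem_closedBall.1 hbq
    _ < δ * X i ^ (-(n : ℝ) / m) :=
      mul_lt_mul_of_pos_right hcδ (Real.rpow_pos_of_pos (hq0.trans_le hqX) _)
    _ ≤ δ * ‖q‖ ^ (-(n : ℝ) / m) := mul_le_mul_of_nonneg_left
      (Real.rpow_le_rpow_of_nonpos hq0 hqX (neg_natCast_div_natCast_nonpos m n)) (by linarith)

theorem exists_measurableSet_subset_approxSet (hm : 0 < m) (hn : 0 < n)
    (hA : ¬ Singular m n A) {δ : ℝ} (hδ : 0 < δ) :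
    ∃ T, MeasurableSet T ∧ volume T ≠ 0 ∧ T ⊆ approxSet A δ := by
  obtain ⟨ε, hε, hfreq⟩ := exists_frequently_le_intDist A hA
  choose X hX hsep using fun i : ℕ => frequently_atTop.1 hfreq (max 4 i)
  obtain ⟨c, hc, hcε, hcδ⟩ : ∃ c : ℝ, 0 < c ∧ 2 * c < ε ∧ c < δ :=
    ⟨min ε δ / 3, by positivity, by linarith [min_le_left ε δ], by linarith [min_le_right ε δ]⟩
  set E := fun i => fractBalls A ⌊X i / 2⌋₊ (c * X i ^ (-(n : ℝ) / m))
  have hE : ∀ i, MeasurableSet (E i) := fun i =>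
    MeasurableSet.biUnion (Set.to_countable _) fun _ _ => measurableSet_closedBall
  have hbdd : ⋃ i, E i ⊆ closedBall 0 (1 + c) := Set.iUnion_subset fun i =>
    Set.iUnion₂_subset fun q _ => closedBall_subset_closedBall' <| by
      have h1 : X i ^ (-(n : ℝ) / m) ≤ 1 := Real.rpow_le_one_of_one_le_of_nonpos
        (by linarith [le_max_left 4 (i : ℝ), hX i]) (neg_natCast_div_natCast_nonpos m n)
      rw [dist_zero_right]
      nlinarith [norm_vecFract_le (A *ᵥ fun j => (q j : ℝ))]
  refine ⟨limsup E atTop, MeasurableSet.measurableSet_limsup hE, ?_, fun b hb =>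
    mem_approxSet_of_frequently_mem_fractBalls A hn (tendsto_atTop_mono
      (fun i => (le_max_right _ _).trans (hX i)) tendsto_natCast_atTop_atTop) hc.le hcδ
      (mem_limsup_iff_frequently_mem.1 hb)⟩
  refine (ENNReal.ofReal_pos.2 (by positivity)).trans_le (le_measure_limsup_atTop hE
    (ne_top_of_le_ne_top measure_closedBall_lt_top.ne (measure_mono hbdd))
    fun i => le_volume_fractBalls A hm hc.le hcε ((le_max_left _ _).trans (hX i))
      (hsep i)) |>.ne'

theorem ae_mem_approxSet (hm : 0 < m) (hn : 0 < n) (hA : ¬ Singular m n A) {δ : ℝ}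
    (hδ : 0 < δ) : ∀ᵐ b, b ∈ approxSet A δ := by
  obtain ⟨T, hTm, hT0, hT⟩ := exists_measurableSet_subset_approxSet A hm hn hA
    (by positivity : 0 < δ / 2 ^ ((n : ℝ) / m))
  filter_upwards [ae_exists_add_mem_of_dense volume (dense_shiftGroup A hm hn hA)
    (countable_shiftGroup A) hTm hT0] with b ⟨g, hg, hbg⟩
  have := add_mem_approxSet A (by positivity) (hT hbg) (neg_mem hg)
  rwa [add_neg_cancel_right, mul_div_cancel₀ _ (by positivity)] at this

end Approximation

/-- If `A` is non-singular then each `Bad_A(δ)` is Lebesgue null, hence so is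
`Bad_A = ⋃_{δ > 0} Bad_A(δ)`. -/
theorem bad_null_of_nonsingular (m n : ℕ) (hm : 0 < m) (hn : 0 < n)
    (A : Matrix (Fin m) (Fin n) ℝ) (hA : ¬ Singular m n A) :
    (∀ δ : ℝ, 0 < δ → volume (BadA m n A δ) = 0) ∧
    volume (⋃ δ ∈ Set.Ioi (0 : ℝ), BadA m n A δ) = 0 := by
  have hbad : ∀ δ : ℝ, 0 < δ → volume (BadA m n A δ) = 0 := fun δ hδ =>
    measure_mono_null (fun b hb => (BadA_eq A δ ▸ hb).2)
      (ae_iff.1 (ae_mem_approxSet A hm hn hA hδ))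
  have hcount : ⋃ δ ∈ Set.Ioi (0 : ℝ), BadA m n A δ ⊆ ⋃ k : ℕ, BadA m n A (1 / (k + 1)) :=
    Set.iUnion₂_subset fun δ hδ => by
      obtain ⟨k, hk⟩ := exists_nat_one_div_lt (show (0 : ℝ) < δ from hδ)
      exact (BadA_antitone A hk.le).trans
        (Set.subset_iUnion (fun k : ℕ => BadA m n A (1 / (k + 1))) k)
  exact ⟨hbad, measure_mono_null hcount
    (measure_iUnion_null fun k => hbad _ Nat.one_div_pos_of_nat)⟩
end

section
/- Let m, n be positive integers, A ∈ M_{m,n}(ℝ), and let (y_k)_{k≥1} be a sequence of nonzero vectors in ℤ^m such that Y_k = ‖y_k‖ is strictly increasing with Y_k → ∞ and M_k = ‖(^tA) y_k‖_ℤ is strictly decreasing with M_k > 0 for all k. For k ≥ 2 set γ_k = max( (Y_k^{m/n} M_{k-1})^{n/(m+n)}, (Y_{k+1}^{m/n} M_k)^{n/(m+n)} ). If ∑_{k≥2} γ_k < ∞, then for every δ > 0 the set Bad_A(δ) has full Lebesgue measure in [0,1]^m. -/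
open MeasureTheory Filter

section Helpers

lemma intDist_nonneg {k : ℕ} (x : Fin k → ℝ) : 0 ≤ intDist x :=
  Real.iInf_nonneg (fun _ => norm_nonneg _)

lemma intDist_lt {k : ℕ} {x : Fin k → ℝ} {c : ℝ} (h : intDist x < c) :
    ∃ p : Fin k → ℤ, ‖x - (fun i => (p i : ℝ))‖ < c :=
  exists_lt_of_ciInf_lt h

lemma finite_int_norm_le (n : ℕ) (C : ℝ) :
    {q : Fin n → ℤ | ‖(fun j => (q j : ℝ))‖ ≤ C}.Finite := by
  apply Set.Finite.subset (Set.Finite.pi (fun _ : Fin n => Set.finite_Icc (-⌈C⌉) ⌈C⌉))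
  intro q hq
  simp only [Set.mem_setOf_eq] at hq
  simp only [Set.mem_pi, Set.mem_univ, Set.mem_Icc, forall_true_left]
  intro j
  have h1 : |(q j : ℝ)| ≤ C := by
    have := norm_le_pi_norm (fun j => (q j : ℝ)) j
    simp only [Real.norm_eq_abs] at this
    linarith
  have h2 : (q j : ℝ) ≤ (⌈C⌉ : ℝ) := le_trans (le_trans (le_abs_self _) h1) (Int.le_ceil C)
  have h3 : (-⌈C⌉ : ℝ) ≤ (q j : ℝ) := by
    have := neg_abs_le (q j : ℝ)
    have h4 : -C ≤ (q j : ℝ) := by linarith [neg_le_neg h1]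
    have := Int.le_ceil C
    linarith
  exact ⟨by exact_mod_cast h3, by exact_mod_cast h2⟩

lemma one_le_norm_int {k : ℕ} {q : Fin k → ℤ} (hq : q ≠ 0) :
    1 ≤ ‖(fun j => (q j : ℝ))‖ := by
  obtain ⟨j, hj⟩ : ∃ j, q j ≠ 0 := by
    by_contra h
    push_neg at h
    exact hq (funext h)
  have h0 : (1 : ℝ) ≤ |(q j : ℝ)| := by
    rw [← Int.cast_abs]; exact_mod_cast Int.one_le_abs hj
  have := norm_le_pi_norm (fun j => (q j : ℝ)) j
  simp only [Real.norm_eq_abs] at this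
  linarith

lemma abs_dot_le {k : ℕ} (u v : Fin k → ℝ) :
    |∑ i, u i * v i| ≤ k * (‖u‖ * ‖v‖) := by
  calc |∑ i, u i * v i| ≤ ∑ i, |u i * v i| := Finset.abs_sum_le_sum_abs _ _
  _ ≤ ∑ _i : Fin k, ‖u‖ * ‖v‖ := by
      apply Finset.sum_le_sum
      intro i _
      rw [abs_mul]
      have h1 : |u i| ≤ ‖u‖ := by
        rw [← Real.norm_eq_abs]; exact norm_le_pi_norm u i
      have h2 : |v i| ≤ ‖v‖ := by
        rw [← Real.norm_eq_abs]; exact norm_le_pi_norm v i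
      exact mul_le_mul h1 h2 (abs_nonneg _) (norm_nonneg _)
  _ = k * (‖u‖ * ‖v‖) := by simp [Finset.sum_const]

lemma transpose_dot {m n : ℕ} (A : Matrix (Fin m) (Fin n) ℝ)
    (yv : Fin m → ℝ) (qv : Fin n → ℝ) :
    ∑ j, A.transpose.mulVec yv j * qv j = ∑ i, yv i * A.mulVec qv i := by
  simp only [Matrix.mulVec, dotProduct, Matrix.transpose_apply,
    Finset.sum_mul, Finset.mul_sum]
  rw [Finset.sum_comm]
  apply Finset.sum_congr rfl
  intro i _
  apply Finset.sum_congr rfl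
  intro j _
  ring

lemma key_approx {m n : ℕ} (A : Matrix (Fin m) (Fin n) ℝ)
    (yv : Fin m → ℤ) (q : Fin n → ℤ) (b : Fin m → ℝ) (p1 : Fin n → ℤ) (p2 : Fin m → ℤ) :
    ∃ p : ℤ, |∑ i, (yv i : ℝ) * b i - (p : ℝ)| ≤
      n * (‖(fun j => (q j : ℝ))‖ *
        ‖A.transpose.mulVec (fun i => (yv i : ℝ)) - (fun j => (p1 j : ℝ))‖)
      + m * (‖(fun i => (yv i : ℝ))‖ *
        ‖A.mulVec (fun j => (q j : ℝ)) - b - (fun i => (p2 i : ℝ))‖) := by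
  refine ⟨∑ j, p1 j * q j - ∑ i, yv i * p2 i, ?_⟩
  set yR : Fin m → ℝ := fun i => (yv i : ℝ)
  set qR : Fin n → ℝ := fun j => (q j : ℝ)
  set d1 : Fin n → ℝ := A.transpose.mulVec yR - (fun j => (p1 j : ℝ)) with hd1
  set d2 : Fin m → ℝ := A.mulVec qR - b - (fun i => (p2 i : ℝ)) with hd2
  have hiden : ∑ i, yR i * b i - ((∑ j, p1 j * q j - ∑ i, yv i * p2 i : ℤ) : ℝ)
      = (∑ j, d1 j * qR j) - (∑ i, yR i * d2 i) := by
    have hswap := transpose_dot A yR qR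
    push_cast
    simp only [hd1, hd2, Pi.sub_apply]
    simp only [sub_mul, mul_sub, Finset.sum_sub_distrib]
    linarith [hswap]
  rw [hiden]
  calc |(∑ j, d1 j * qR j) - (∑ i, yR i * d2 i)|
      ≤ |∑ j, d1 j * qR j| + |∑ i, yR i * d2 i| := abs_sub _ _
  _ ≤ n * (‖d1‖ * ‖qR‖) + m * (‖yR‖ * ‖d2‖) := by
      gcongr
      · exact abs_dot_le d1 qR
      · exact abs_dot_le yR d2
  _ = n * (‖qR‖ * ‖d1‖) + m * (‖yR‖ * ‖d2‖) := by ring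

lemma det_updateRow_one {m : ℕ} (i : Fin m) (v : Fin m → ℝ) :
    ((1 : Matrix (Fin m) (Fin m) ℝ).updateRow i v).det = v i := by
  have h : v = ∑ k : Fin m, v k • (1 : Matrix (Fin m) (Fin m) ℝ) k := by
    funext j
    simp [Matrix.one_apply]
  rw [h, Matrix.det_updateRow_sum]
  simp [Matrix.one_apply]

lemma aux_rpow1 (s t Yv Mv : ℝ) (hs : 0 < s) (ht : 0 < t) (hY : 0 < Yv) (hM : 0 < Mv) :
    (Yv ^ (s / t) * Mv) ^ (t / (s + t)) = Yv ^ (s / (s + t)) * Mv ^ (t / (s + t)) := by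
  rw [Real.mul_rpow (Real.rpow_nonneg hY.le _) hM.le, ← Real.rpow_mul hY.le]
  have h : s / t * (t / (s + t)) = s / (s + t) := by
    field_simp
  rw [h]

lemma aux_rpow2 (s t Yv Mv : ℝ) (hs : 0 < s) (ht : 0 < t) (hY : 0 < Yv) (hM : 0 < Mv) :
    (Yv / Mv) ^ (s / (s + t)) * Mv = Yv ^ (s / (s + t)) * Mv ^ (t / (s + t)) := by
  have hst : s + t ≠ 0 := by positivity
  have hMs : Mv ^ (t / (s + t)) * Mv ^ (s / (s + t)) = Mv := by
    rw [← Real.rpow_add hM]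
    have h : t / (s + t) + s / (s + t) = 1 := by field_simp; ring
    rw [h, Real.rpow_one]
  have h2 : Mv / Mv ^ (s / (s + t)) = Mv ^ (t / (s + t)) := by
    rw [div_eq_iff (Real.rpow_pos_of_pos hM _).ne']
    exact hMs.symm
  rw [Real.div_rpow hY.le hM.le, div_mul_eq_mul_div, mul_div_assoc, h2]

lemma aux_rpow3 (s t Yv Mv : ℝ) (hs : 0 < s) (ht : 0 < t) (hY : 0 < Yv) (hM : 0 < Mv) :
    Yv * ((Yv / Mv) ^ (s / (s + t))) ^ (-(t / s)) = Yv ^ (s / (s + t)) * Mv ^ (t / (s + t)) := by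
  have hst : s + t ≠ 0 := by positivity
  have hdiv : (0:ℝ) ≤ Yv / Mv := by positivity
  rw [← Real.rpow_mul hdiv]
  have h : s / (s + t) * -(t / s) = -(t / (s + t)) := by
    field_simp
  rw [h, Real.rpow_neg hdiv, ← Real.inv_rpow hdiv, inv_div, Real.div_rpow hM.le hY.le]
  have hYs : Yv / Yv ^ (t / (s + t)) = Yv ^ (s / (s + t)) := by
    rw [div_eq_iff (Real.rpow_pos_of_pos hY _).ne', ← Real.rpow_add hY]
    have h' : s / (s + t) + t / (s + t) = 1 := by field_simp
    rw [h', Real.rpow_one]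
  rw [show Yv * (Mv ^ (t / (s + t)) / Yv ^ (t / (s + t)))
      = Mv ^ (t / (s + t)) * (Yv / Yv ^ (t / (s + t))) from by ring, hYs]
  ring

lemma slab_volume {m : ℕ} (hm : 0 < m) (y : Fin m → ℤ) (i : Fin m)
    (hyi : y i ≠ 0) (hmax : ∀ j, |y j| ≤ |y i|) (w : ℝ) (hw : 0 < w) :
    volume {b : Fin m → ℝ | b ∈ Set.Icc 0 1 ∧
      ∃ p : ℤ, |(∑ j, (y j : ℝ) * b j) - p| < w} ≤
      ENNReal.ofReal ((4 * m + 2) * w + 4 * w ^ 2) := by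
  set a : ℝ := (y i : ℝ) with ha
  have ha1 : (1 : ℝ) ≤ |a| := by
    rw [ha, ← Int.cast_abs]
    exact_mod_cast Int.one_le_abs hyi
  have ha0 : a ≠ 0 := by
    intro h; rw [h] at ha1; simp at ha1; linarith
  -- the matrix and linear map
  set N : Matrix (Fin m) (Fin m) ℝ :=
    (1 : Matrix (Fin m) (Fin m) ℝ).updateRow i (fun j => (y j : ℝ)) with hN
  have hdet : N.det = a := det_updateRow_one i _
  set f : (Fin m → ℝ) →ₗ[ℝ] (Fin m → ℝ) := Matrix.toLin' N with hf
  have hdetf : LinearMap.det f = a := by rw [hf, LinearMap.det_toLin', hdet]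
  have hdetf0 : LinearMap.det f ≠ 0 := by rw [hdetf]; exact ha0
  -- the finite set of integers
  set F : Finset ℤ := Finset.Icc ⌈-(m * |a|) - w⌉ ⌊m * |a| + w⌋ with hF
  set U : Set ℝ := ⋃ p ∈ F, Set.Ioo ((p : ℝ) - w) ((p : ℝ) + w) with hU
  set S : Set (Fin m → ℝ) :=
    Set.univ.pi (fun j => if j = i then U else Set.Icc (0 : ℝ) 1) with hS
  -- inclusion
  have hsub : {b : Fin m → ℝ | b ∈ Set.Icc 0 1 ∧
      ∃ p : ℤ, |(∑ j, (y j : ℝ) * b j) - p| < w} ⊆ f ⁻¹' S := by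
    rintro b ⟨hb, p, hp⟩
    have hb0 : ∀ j, 0 ≤ b j := fun j => hb.1 j
    have hb1 : ∀ j, b j ≤ 1 := fun j => hb.2 j
    have hfb : ∀ j, f b j = ∑ k, N j k * b k := by
      intro j
      rw [hf]
      simp [Matrix.toLin'_apply, Matrix.mulVec, dotProduct]
    intro j _
    by_cases hj : j = i
    · subst hj
      simp only [if_pos rfl]
      have hrow : ∀ k, N j k = (y k : ℝ) := by
        intro k; rw [hN]; simp
      have ht : f b j = ∑ k, (y k : ℝ) * b k := by
        rw [hfb]; exact Finset.sum_congr rfl (fun k _ => by rw [hrow])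
      -- bound |t|
      have htb : |∑ k, (y k : ℝ) * b k| ≤ m * |a| := by
        calc |∑ k, (y k : ℝ) * b k| ≤ ∑ k, |(y k : ℝ) * b k| :=
              Finset.abs_sum_le_sum_abs _ _
        _ ≤ ∑ _k : Fin m, |a| := by
            apply Finset.sum_le_sum
            intro k _
            rw [abs_mul]
            have h1 : |(y k : ℝ)| ≤ |a| := by
              rw [ha, ← Int.cast_abs, ← Int.cast_abs]
              exact_mod_cast hmax k
            have h2 : |b k| ≤ 1 := by rw [abs_of_nonneg (hb0 k)]; exact hb1 k
            calc |(y k : ℝ)| * |b k| ≤ |a| * 1 :=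
                  mul_le_mul h1 h2 (abs_nonneg _) (abs_nonneg _)
            _ = |a| := by ring
        _ = m * |a| := by simp [Finset.sum_const]
      have hpF : p ∈ F := by
        rw [hF, Finset.mem_Icc]
        have hple : (p : ℝ) ≤ m * |a| + w := by
          have := abs_le.1 (le_of_lt hp)
          have := abs_le.1 htb
          linarith [this.2]
        have hpge : -(m * |a|) - w ≤ (p : ℝ) := by
          have h1 := abs_le.1 (le_of_lt hp)
          have h2 := abs_le.1 htb
          linarith [h1.1, h2.1]
        exact ⟨Int.ceil_le.2 hpge, Int.le_floor.2 hple⟩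
      rw [ht]
      rw [hU]
      refine Set.mem_biUnion hpF ?_
      have := abs_lt.1 hp
      constructor <;> [linarith [this.1]; linarith [this.2]]
    · simp only [if_neg hj]
      have hrow : ∀ k, N j k = (1 : Matrix (Fin m) (Fin m) ℝ) j k := by
        intro k; rw [hN]; simp [Matrix.updateRow_ne hj]
      have : f b j = b j := by
        rw [hfb]
        rw [Finset.sum_congr rfl (fun k _ => by rw [hrow k])]
        simp [Matrix.one_apply]
      rw [this]
      exact ⟨hb0 j, hb1 j⟩
  -- volume computation
  have hvol : volume (f ⁻¹' S) = ENNReal.ofReal |a⁻¹| * volume S := by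
    rw [← hdetf]
    exact Measure.addHaar_preimage_linearMap volume hdetf0 S
  have hvolS : volume S = volume U := by
    rw [hS, volume_pi_pi]
    have hvif : ∀ j : Fin m, volume (if j = i then U else Set.Icc (0:ℝ) 1)
        = if j = i then volume U else 1 := by
      intro j; split <;> simp [Real.volume_Icc]
    simp_rw [hvif]
    exact Fintype.prod_ite_eq' i (fun _ => volume U)
  -- bound volume U
  have hcard : ((F.card : ℝ)) ≤ 2 * m * |a| + 2 * w + 1 := by
    rw [hF, Int.card_Icc]
    rcases le_or_gt ⌈-(↑m * |a|) - w⌉ ⌊(m : ℝ) * |a| + w⌋ with h | h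
    · have hX : (0:ℤ) ≤ ⌊(m:ℝ) * |a| + w⌋ + 1 - ⌈-(↑m * |a|) - w⌉ := by omega
      have hc : (((⌊(m:ℝ) * |a| + w⌋ + 1 - ⌈-(↑m * |a|) - w⌉ : ℤ).toNat : ℕ) : ℝ)
          = ((⌊(m:ℝ) * |a| + w⌋ + 1 - ⌈-(↑m * |a|) - w⌉ : ℤ) : ℝ) := by
        exact_mod_cast congrArg (fun z : ℤ => (z : ℝ)) (Int.toNat_of_nonneg hX)
      rw [hc]
      push_cast
      have h2 : ((⌊(m:ℝ) * |a| + w⌋ : ℤ) : ℝ) ≤ (m:ℝ) * |a| + w := Int.floor_le _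
      have h3 : -(↑m * |a|) - w ≤ ((⌈-(↑m * |a|) - w⌉ : ℤ) : ℝ) := Int.le_ceil _
      linarith
    · rw [Int.toNat_of_nonpos (by omega)]
      push_cast
      positivity
  have hvolU : volume U ≤ ENNReal.ofReal ((2 * m * |a| + 2 * w + 1) * (2 * w)) := by
    rw [hU]
    calc volume (⋃ p ∈ F, Set.Ioo ((p:ℝ) - w) ((p:ℝ) + w))
        ≤ ∑ p ∈ F, volume (Set.Ioo ((p:ℝ) - w) ((p:ℝ) + w)) :=
          measure_biUnion_finset_le F _
    _ = ∑ _p ∈ F, ENNReal.ofReal (2 * w) := by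
          apply Finset.sum_congr rfl
          intro p _
          rw [Real.volume_Ioo]
          congr 1
          ring
    _ = (F.card : ENNReal) * ENNReal.ofReal (2 * w) := by
          rw [Finset.sum_const, nsmul_eq_mul]
    _ ≤ ENNReal.ofReal (2 * m * |a| + 2 * w + 1) * ENNReal.ofReal (2 * w) := by
          apply mul_le_mul_left
          rw [← ENNReal.ofReal_natCast]
          exact ENNReal.ofReal_le_ofReal hcard
    _ = ENNReal.ofReal ((2 * m * |a| + 2 * w + 1) * (2 * w)) :=
          (ENNReal.ofReal_mul (by positivity)).symm
  -- put together
  calc volume {b : Fin m → ℝ | b ∈ Set.Icc 0 1 ∧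
      ∃ p : ℤ, |(∑ j, (y j : ℝ) * b j) - p| < w}
      ≤ volume (f ⁻¹' S) := measure_mono hsub
  _ = ENNReal.ofReal |a⁻¹| * volume U := by rw [hvol, hvolS]
  _ ≤ ENNReal.ofReal |a⁻¹| * ENNReal.ofReal ((2 * m * |a| + 2 * w + 1) * (2 * w)) :=
        mul_le_mul_right hvolU _
  _ = ENNReal.ofReal (|a⁻¹| * ((2 * m * |a| + 2 * w + 1) * (2 * w))) := by
        rw [← ENNReal.ofReal_mul (abs_nonneg _)]
  _ ≤ ENNReal.ofReal ((4 * m + 2) * w + 4 * w ^ 2) := by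
        apply ENNReal.ofReal_le_ofReal
        rw [abs_inv]
        have hinv : |a|⁻¹ ≤ 1 := by
          rw [inv_le_one_iff₀]; right; exact ha1
        have hpos : (0 : ℝ) < |a| := by linarith
        have key : |a|⁻¹ * ((2 * m * |a| + 2 * w + 1) * (2 * w))
            = (4 * m) * w + |a|⁻¹ * ((2 * w + 1) * (2 * w)) := by
          field_simp
          ring
        rw [key]
        have h2 : |a|⁻¹ * ((2 * w + 1) * (2 * w)) ≤ (2 * w + 1) * (2 * w) := by
          apply mul_le_of_le_one_left (by positivity) hinv
        nlinarith [h2]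

end Helpers

/-- Theorem: if the sequence of best approximations `(y_k)` for `ᵗA` satisfies
`∑_k max((Y_k^{m/n} M_{k-1})^{n/(m+n)}, (Y_{k+1}^{m/n} M_k)^{n/(m+n)}) < ∞`, then for
every `δ > 0` the set `Bad_A(δ)` has full Lebesgue measure in `[0,1]^m`.
Here the sequence is indexed so that `y (k-1)` plays the role of `y_k`. -/
theorem bad_full_of_summable (m n : ℕ) (hm : 0 < m) (hn : 0 < n)
    (A : Matrix (Fin m) (Fin n) ℝ)
    (y : ℕ → (Fin m → ℤ)) (hy : ∀ k, y k ≠ 0)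
    (Y M : ℕ → ℝ)
    (hY : ∀ k, Y k = ‖(fun i => (y k i : ℝ))‖)
    (hM : ∀ k, M k = intDist (A.transpose.mulVec (fun i => (y k i : ℝ))))
    (hYmono : StrictMono Y) (hYtop : Tendsto Y atTop atTop)
    (hMmono : StrictAnti M) (hMpos : ∀ k, 0 < M k)
    (hsum : Summable (fun k : ℕ =>
      max ((Y (k + 1) ^ ((m : ℝ) / n) * M k) ^ ((n : ℝ) / (m + n)))
          ((Y (k + 2) ^ ((m : ℝ) / n) * M (k + 1)) ^ ((n : ℝ) / (m + n))))) :
    ∀ δ : ℝ, 0 < δ → volume (BadA m n A δ) = 1 := by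
  intro δ hδ
  have hmR : (0:ℝ) < m := by exact_mod_cast hm
  have hnR : (0:ℝ) < n := by exact_mod_cast hn
  have hY1 : ∀ k, (1:ℝ) ≤ Y k := fun k => by rw [hY k]; exact one_le_norm_int (hy k)
  have hYpos : ∀ k, (0:ℝ) < Y k := fun k => lt_of_lt_of_le one_pos (hY1 k)
  set g : ℕ → ℝ := fun k => max ((Y (k + 1) ^ ((m : ℝ) / n) * M k) ^ ((n : ℝ) / (m + n)))
          ((Y (k + 2) ^ ((m : ℝ) / n) * M (k + 1)) ^ ((n : ℝ) / (m + n))) with hgdef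
  have hg0 : ∀ k, 0 ≤ g k := fun k =>
    le_trans (Real.rpow_nonneg (mul_nonneg (Real.rpow_nonneg (hYpos _).le _) (hMpos _).le) _)
      (le_max_left _ _)
  -- the cut points
  set R : ℕ → ℝ := fun k => (Y (k+1) / M k) ^ ((m:ℝ)/((m:ℝ)+(n:ℝ))) with hRdef
  have hRpos : ∀ k, 0 < R k := fun k => Real.rpow_pos_of_pos (div_pos (hYpos _) (hMpos _)) _
  have hRmono : Monotone R := by
    intro j k hjk
    apply Real.rpow_le_rpow (le_of_lt (div_pos (hYpos _) (hMpos _))) ?_ (by positivity)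
    exact div_le_div₀ (hYpos (k+1)).le (hYmono.monotone (by omega)) (hMpos k)
      (hMmono.antitone (by omega))
  have hRtop : Tendsto R atTop atTop := by
    have h1 : Tendsto (fun k => Y (k+1) / M 0) atTop atTop :=
      ((hYtop.comp (tendsto_add_atTop_nat 1))).atTop_div_const (hMpos 0)
    have h2 : Tendsto (fun k => Y (k+1) / M k) atTop atTop := by
      apply tendsto_atTop_mono ?_ h1
      intro k
      exact div_le_div_of_nonneg_left (hYpos (k+1)).le (hMpos k) (hMmono.antitone (Nat.zero_le k))
    exact (tendsto_rpow_atTop (by positivity : (0:ℝ) < (m:ℝ)/((m:ℝ)+(n:ℝ)))).comp h2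
  -- the widths
  set w : ℕ → ℝ := fun k =>
    2*(n:ℝ)*(R (k+1) * M (k+1)) + (m:ℝ)*δ*(Y (k+1) * (R k) ^ (-(n:ℝ)/(m:ℝ))) with hwdef
  have hwpos : ∀ k, 0 < w k := by
    intro k
    have h1 : 0 < R (k+1) * M (k+1) := mul_pos (hRpos _) (hMpos _)
    have h2 : 0 < Y (k+1) * (R k) ^ (-(n:ℝ)/(m:ℝ)) :=
      mul_pos (hYpos _) (Real.rpow_pos_of_pos (hRpos _) _)
    have h3 : 0 < 2*(n:ℝ) := by positivity
    have h4 : 0 < (m:ℝ)*δ := by positivity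
    positivity
  have hwle : ∀ k, w k ≤ (2*(n:ℝ) + (m:ℝ)*δ) * g k := by
    intro k
    have e1 : R (k+1) * M (k+1) = (Y (k+2) ^ ((m:ℝ)/n) * M (k+1)) ^ ((n:ℝ)/((m:ℝ)+(n:ℝ))) := by
      rw [hRdef]
      rw [aux_rpow2 (m:ℝ) (n:ℝ) (Y (k+2)) (M (k+1)) hmR hnR (hYpos _) (hMpos _),
        aux_rpow1 (m:ℝ) (n:ℝ) (Y (k+2)) (M (k+1)) hmR hnR (hYpos _) (hMpos _)]
    have e2 : Y (k+1) * (R k) ^ (-(n:ℝ)/(m:ℝ))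
        = (Y (k+1) ^ ((m:ℝ)/n) * M k) ^ ((n:ℝ)/((m:ℝ)+(n:ℝ))) := by
      rw [hRdef, neg_div]
      rw [aux_rpow3 (m:ℝ) (n:ℝ) (Y (k+1)) (M k) hmR hnR (hYpos _) (hMpos _),
        aux_rpow1 (m:ℝ) (n:ℝ) (Y (k+1)) (M k) hmR hnR (hYpos _) (hMpos _)]
    rw [hwdef]
    simp only []
    rw [e1, e2]
    have hle1 : (Y (k+2) ^ ((m:ℝ)/n) * M (k+1)) ^ ((n:ℝ)/((m:ℝ)+(n:ℝ))) ≤ g k :=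
      le_max_right _ _
    have hle2 : (Y (k+1) ^ ((m:ℝ)/n) * M k) ^ ((n:ℝ)/((m:ℝ)+(n:ℝ))) ≤ g k :=
      le_max_left _ _
    nlinarith [hg0 k, mul_le_mul_of_nonneg_left hle1 (by positivity : (0:ℝ) ≤ 2*(n:ℝ)),
      mul_le_mul_of_nonneg_left hle2 (by positivity : (0:ℝ) ≤ (m:ℝ)*δ)]
  -- the bad sets
  set S : ℕ → Set (Fin m → ℝ) := fun k =>
    {b : Fin m → ℝ | b ∈ Set.Icc 0 1 ∧
      ∃ p : ℤ, |(∑ i, (y (k+1) i : ℝ) * b i) - p| < w k} with hSdef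
  have hSvol : ∀ k, volume (S k) ≤ ENNReal.ofReal ((4*m+2) * w k + 4 * w k ^ 2) := by
    intro k
    have hne : Nonempty (Fin m) := Fin.pos_iff_nonempty.mp hm
    obtain ⟨i, _, hi⟩ := Finset.exists_max_image (Finset.univ : Finset (Fin m))
      (fun j => |y (k+1) j|) (Finset.univ_nonempty)
    obtain ⟨j0, hj0⟩ : ∃ j, y (k+1) j ≠ 0 := by
      by_contra h
      push_neg at h
      exact hy (k+1) (funext h)
    have hyi : y (k+1) i ≠ 0 := by
      intro h
      have h1 := hi j0 (Finset.mem_univ _)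
      rw [h] at h1
      simp at h1
      omega
    exact slab_volume hm (y (k+1)) i hyi (fun j => hi j (Finset.mem_univ _)) (w k) (hwpos k)
  -- summability
  have hw0 : ∀ k, 0 ≤ w k := fun k => (hwpos k).le
  have hsw : Summable w := Summable.of_nonneg_of_le hw0 hwle (hsum.mul_left _)
  have hB : ∀ k, w k ≤ (2*(n:ℝ) + (m:ℝ)*δ) * ∑' j, g j := by
    intro k
    refine le_trans (hwle k) ?_
    apply mul_le_mul_of_nonneg_left ?_ (by positivity)
    exact Summable.le_tsum hsum k (fun j _ => hg0 j)
  have hsw2 : Summable (fun k => w k ^ 2) := by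
    apply Summable.of_nonneg_of_le (fun k => sq_nonneg _) ?_
      (hsw.mul_left ((2*(n:ℝ) + (m:ℝ)*δ) * ∑' j, g j))
    intro k
    rw [sq]
    exact mul_le_mul_of_nonneg_right (hB k) (hw0 k)
  have hsumF : Summable (fun k => (4*(m:ℝ)+2) * w k + 4 * w k ^ 2) :=
    (hsw.mul_left _).add (hsw2.mul_left 4)
  have htsum : (∑' k, volume (S k)) ≠ ⊤ := by
    apply ne_top_of_le_ne_top ?_ (ENNReal.tsum_le_tsum hSvol)
    rw [← ENNReal.ofReal_tsum_of_nonneg (fun k => add_nonneg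
      (mul_nonneg (by positivity) (hw0 k)) (mul_nonneg (by norm_num) (sq_nonneg _))) hsumF]
    exact ENNReal.ofReal_ne_top
  have hlimsup : volume (limsup S atTop) = 0 := measure_limsup_atTop_eq_zero htsum
  -- inclusion of W in the limsup
  have hsub : WA m n A (fun r => δ * r ^ (-(n:ℝ) / (m:ℝ))) ⊆ limsup S atTop := by
    rintro b ⟨hbIcc, hbinf⟩
    rw [mem_limsup_iff_frequently_mem, Filter.frequently_atTop]
    intro K
    -- choose q with large norm
    obtain ⟨q, hqQ, hqnorm⟩ : ∃ q : Fin n → ℤ,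
        intDist (A.mulVec (fun j => (q j : ℝ)) - b)
          < δ * ‖(fun j => (q j : ℝ))‖ ^ (-(n:ℝ) / (m:ℝ))
        ∧ R K < ‖(fun j => (q j : ℝ))‖ := by
      by_contra h
      push_neg at h
      apply hbinf
      apply Set.Finite.subset (finite_int_norm_le n (R K))
      intro q hq
      exact h q hq
    have hq0 : q ≠ 0 := by
      rintro rfl
      simp only [Pi.zero_apply, Int.cast_zero] at hqnorm
      rw [show (fun _ : Fin n => (0:ℝ)) = (0 : Fin n → ℝ) from rfl, norm_zero] at hqnorm
      exact absurd hqnorm (not_lt.2 (hRpos K).le)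
    set r : ℝ := ‖(fun j => (q j : ℝ))‖ with hrdef
    have hr1 : (1:ℝ) ≤ r := one_le_norm_int hq0
    have hrpos : (0:ℝ) < r := lt_of_lt_of_le one_pos hr1
    have hex : ∃ j, r ≤ R j := (hRtop.eventually_ge_atTop r).exists
    set J := Nat.find hex with hJdef
    have hJspec : r ≤ R J := Nat.find_spec hex
    have hJK : K + 1 ≤ J := by
      by_contra h
      push_neg at h
      have : R J ≤ R K := hRmono (by omega)
      linarith [hqnorm]
    set k := J - 1 with hkdef
    have hJk : J = k + 1 := by omega
    have hkK : K ≤ k := by omega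
    have hrlt : R k < r := by
      have := Nat.find_min hex (show k < J by omega)
      push_neg at this
      exact this
    refine ⟨k, hkK, ?_⟩
    -- produce the integer p
    have hMk : intDist (A.transpose.mulVec (fun i => (y (k+1) i : ℝ))) < 2 * M (k+1) := by
      rw [← hM]
      linarith [hMpos (k+1)]
    obtain ⟨p1, hp1⟩ := intDist_lt hMk
    obtain ⟨p2, hp2⟩ := intDist_lt hqQ
    obtain ⟨p, hp⟩ := key_approx A (y (k+1)) q b p1 p2
    refine ⟨hbIcc, p, ?_⟩
    have hnormy : ‖(fun i => (y (k+1) i : ℝ))‖ = Y (k+1) := (hY (k+1)).symm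
    rw [hnormy] at hp
    have hd1 : (0:ℝ) ≤ ‖A.transpose.mulVec (fun i => (y (k+1) i : ℝ))
        - (fun j => (p1 j : ℝ))‖ := norm_nonneg _
    have hd2 : (0:ℝ) ≤ ‖A.mulVec (fun j => (q j : ℝ)) - b - (fun i => (p2 i : ℝ))‖ :=
      norm_nonneg _
    have hstep : (n:ℝ) * (r * ‖A.transpose.mulVec (fun i => (y (k+1) i : ℝ))
          - (fun j => (p1 j : ℝ))‖)
        + (m:ℝ) * (Y (k+1) * ‖A.mulVec (fun j => (q j : ℝ)) - b - (fun i => (p2 i : ℝ))‖)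
        < w k := by
      have hb1 : (n:ℝ) * (r * ‖A.transpose.mulVec (fun i => (y (k+1) i : ℝ))
          - (fun j => (p1 j : ℝ))‖) < (n:ℝ) * (r * (2 * M (k+1))) := by
        apply mul_lt_mul_of_pos_left ?_ hnR
        exact mul_lt_mul_of_pos_left hp1 hrpos
      have hb2 : (m:ℝ) * (Y (k+1) * ‖A.mulVec (fun j => (q j : ℝ)) - b
          - (fun i => (p2 i : ℝ))‖)
          < (m:ℝ) * (Y (k+1) * (δ * r ^ (-(n:ℝ) / (m:ℝ)))) := by
        apply mul_lt_mul_of_pos_left ?_ hmR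
        exact mul_lt_mul_of_pos_left hp2 (hYpos (k+1))
      have hc1 : (n:ℝ) * (r * (2 * M (k+1))) ≤ 2*(n:ℝ)*(R (k+1) * M (k+1)) := by
        have hrR : r ≤ R (k+1) := by rw [← hJk]; exact hJspec
        calc (n:ℝ) * (r * (2 * M (k+1))) = 2*(n:ℝ)*(r * M (k+1)) := by ring
        _ ≤ 2*(n:ℝ)*(R (k+1) * M (k+1)) := by
            apply mul_le_mul_of_nonneg_left
              (mul_le_mul_of_nonneg_right hrR (hMpos (k+1)).le) (by positivity)
      have hc2 : (m:ℝ) * (Y (k+1) * (δ * r ^ (-(n:ℝ) / (m:ℝ))))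
          ≤ (m:ℝ)*δ*(Y (k+1) * (R k) ^ (-(n:ℝ)/(m:ℝ))) := by
        have hrr : r ^ (-(n:ℝ) / (m:ℝ)) ≤ (R k) ^ (-(n:ℝ) / (m:ℝ)) :=
          Real.rpow_le_rpow_of_nonpos (hRpos k) hrlt.le
            (by rw [neg_div]; exact neg_nonpos.2 (by positivity))
        calc (m:ℝ) * (Y (k+1) * (δ * r ^ (-(n:ℝ) / (m:ℝ))))
            = (m:ℝ)*δ*(Y (k+1) * r ^ (-(n:ℝ) / (m:ℝ))) := by ring
        _ ≤ (m:ℝ)*δ*(Y (k+1) * (R k) ^ (-(n:ℝ)/(m:ℝ))) := by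
            apply mul_le_mul_of_nonneg_left
              (mul_le_mul_of_nonneg_left hrr (hYpos (k+1)).le)
              (mul_nonneg (Nat.cast_nonneg m) hδ.le)
      rw [hwdef]
      simp only []
      linarith
    calc |(∑ i, (y (k+1) i : ℝ) * b i) - (p:ℝ)| ≤ _ := hp
    _ < w k := hstep
  -- conclusion
  have hWnull : volume (WA m n A (fun r => δ * r ^ (-(n:ℝ) / (m:ℝ)))) = 0 :=
    measure_mono_null hsub hlimsup
  rw [BadA]
  rw [measure_diff_null hWnull, Real.volume_Icc_pi]
  simp
end

section
/- (Transference principle) Let m, n be positive integers, A ∈ M_{m,n}(ℝ), and C, X > 0. Suppose there is no q ∈ ℤ^n with ‖Aq‖_ℤ < C and 0 < ‖q‖ < X. Then for any b ∈ ℝ^m there exists q ∈ ℤ^n such that ‖Aq − b‖_ℤ ≤ C₁ and ‖q‖ ≤ X₁, where h = X^{−n} C^{−m}, C₁ = (1/2)(h+1)C and X₁ = (1/2)(h+1)X. -/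
open MeasureTheory Filter
open scoped Pointwise ENNReal

set_option maxHeartbeats 1600000 in
/-- Key covering lemma: if the lattice `N·ℤ^ι` (with `det N = h > 0`) has no nonzero
point of sup-norm `< 1`, then every point of `ℝ^ι` is within sup-norm distance
`(h+1)/2` of the lattice. -/
theorem covering_of_packing {ι : Type*} [Fintype ι] [DecidableEq ι]
    (N : Matrix ι ι ℝ) (h : ℝ) (hpos : 0 < h) (hdet : N.det = h)
    (hpack : ∀ c : ι → ℤ, c ≠ 0 → 1 ≤ ‖N.mulVec (fun i => (c i : ℝ))‖)
    (y : ι → ℝ) :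
    ∃ c : ι → ℤ, ‖y - N.mulVec (fun i => (c i : ℝ))‖ ≤ (h + 1) / 2 := by
  classical
  by_contra hcon
  push_neg at hcon
  have hNdet : IsUnit N.det := by rw [hdet]; exact isUnit_iff_ne_zero.2 hpos.ne'
  have hNinv : Invertible N := N.invertibleOfIsUnitDet hNdet
  set Φ : (ι → ℝ) ≃ₗ[ℝ] (ι → ℝ) := N.toLinearEquiv' hNinv with hΦdef
  have hΦ : ∀ v : ι → ℝ, Φ v = N.mulVec v := fun v => rfl
  set bb : Module.Basis ι ℝ (ι → ℝ) := (Pi.basisFun ℝ ι).map Φ with hbbdef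
  have hbb : ∀ i, bb i = fun j => N j i := by
    intro i
    rw [hbbdef, Module.Basis.map_apply, Pi.basisFun_apply, hΦ, Matrix.mulVec_single]
    simp
    rfl
  set L := Submodule.span ℤ (Set.range ⇑bb) with hLdef
  have hbridge : ∀ c : ι → ℤ, (∑ i, c i • bb i) = N.mulVec (fun i => (c i : ℝ)) := by
    intro c
    funext j
    simp only [Finset.sum_apply, Pi.smul_apply, hbb, zsmul_eq_mul, Matrix.mulVec,
      dotProduct]
    exact Finset.sum_congr rfl fun i _ => mul_comm _ _
  have hmem : ∀ w : ι → ℝ, w ∈ L ↔ ∃ c : ι → ℤ, N.mulVec (fun i => (c i : ℝ)) = w := by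
    intro w
    rw [hLdef, Submodule.mem_span_range_iff_exists_fun]
    exact exists_congr fun c => by rw [hbridge]
  -- minimization: nearest lattice point to y
  obtain ⟨c₀, hc₀⟩ : ∃ c₀ : ι → ℤ, ∀ c : ι → ℤ,
      ‖y - N.mulVec (fun i => (c₀ i : ℝ))‖ ≤ ‖y - N.mulVec (fun i => (c i : ℝ))‖ := by
    set f : (ι → ℤ) → ℝ := fun c => ‖y - N.mulVec (fun i => (c i : ℝ))‖ with hf
    set R : ℝ := f 0 with hR
    set T : Set (ι → ℤ) := {c | f c ≤ R} with hT
    have hT0 : (0 : ι → ℤ) ∈ T := hR.ge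
    set g : (ι → ℝ) →L[ℝ] (ι → ℝ) := LinearMap.toContinuousLinearMap (Matrix.toLin' N⁻¹) with hg
    have hginv : ∀ v : ι → ℝ, g (N.mulVec v) = v := by
      intro v
      simp only [hg, LinearMap.coe_toContinuousLinearMap', Matrix.toLin'_apply,
        Matrix.mulVec_mulVec, Matrix.nonsing_inv_mul N hNdet, Matrix.one_mulVec]
    have hgB : ∀ v : ι → ℝ, ‖v‖ ≤ ‖g‖ * ‖N.mulVec v‖ := by
      intro v
      calc ‖v‖ = ‖g (N.mulVec v)‖ := by rw [hginv]
        _ ≤ ‖g‖ * ‖N.mulVec v‖ := g.le_opNorm _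
    have hTfin : T.Finite := by
      set K : ℝ := ‖g‖ * (‖y‖ + R) with hK
      refine Set.Finite.subset (Set.finite_Icc (fun _ : ι => -⌈K⌉) fun _ : ι => ⌈K⌉) ?_
      intro c hc
      have h1 : ‖N.mulVec (fun i => (c i : ℝ))‖ ≤ ‖y‖ + R := by
        have h2 : f c ≤ R := hc
        have h3 : ‖N.mulVec (fun i => (c i : ℝ))‖ ≤ ‖y‖ + ‖y - N.mulVec (fun i => (c i : ℝ))‖ := by
          have := norm_sub_le y (y - N.mulVec (fun i => (c i : ℝ)))
          simpa using this
        linarith [h3, h2]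
      have h4 : ‖(fun i => (c i : ℝ))‖ ≤ K := by
        refine le_trans (hgB _) ?_
        exact mul_le_mul_of_nonneg_left h1 (norm_nonneg g)
      constructor <;> intro i
      · have h5 : |(c i : ℝ)| ≤ K := by
          have := norm_le_pi_norm (fun i => (c i : ℝ)) i
          rw [Real.norm_eq_abs] at this
          exact le_trans this h4
        have h6 : -(⌈K⌉ : ℝ) ≤ (c i : ℝ) := by
          have := neg_abs_le (c i : ℝ)
          have h7 : K ≤ (⌈K⌉ : ℝ) := Int.le_ceil K
          linarith
        exact_mod_cast h6
      · have h5 : |(c i : ℝ)| ≤ K := by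
          have := norm_le_pi_norm (fun i => (c i : ℝ)) i
          rw [Real.norm_eq_abs] at this
          exact le_trans this h4
        have h6 : (c i : ℝ) ≤ (⌈K⌉ : ℝ) := le_trans (le_trans (le_abs_self _) h5) (Int.le_ceil K)
        exact_mod_cast h6
    obtain ⟨c₀, hc₀T, hmin⟩ := Set.exists_min_image T f hTfin ⟨0, hT0⟩
    refine ⟨c₀, fun c => ?_⟩
    by_cases hcT : c ∈ T
    · exact hmin c hcT
    · have : R < f c := lt_of_not_ge hcT
      exact le_trans (le_trans (hmin 0 hT0) (le_refl R)) this.le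

  -- the nearest lattice point and the unit direction towards y
  set w₀ : ι → ℝ := N.mulVec (fun i => (c₀ i : ℝ)) with hw₀
  set M₀ : ℝ := ‖y - w₀‖ with hM₀
  have hM₀r : (h + 1) / 2 < M₀ := hcon c₀
  have hM₀pos : 0 < M₀ := lt_trans (by linarith) hM₀r
  set v : ι → ℝ := M₀⁻¹ • (y - w₀) with hv
  have hvnorm : ‖v‖ = 1 := by
    rw [hv, norm_smul, norm_inv, Real.norm_eq_abs, abs_of_pos hM₀pos, ← hM₀]
    field_simp
  have hyw : y - w₀ = M₀ • v := by
    rw [hv, smul_smul, mul_inv_cancel₀ hM₀pos.ne', one_smul]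
  have hseg : ∀ (t : ℝ) (c : ι → ℤ),
      min t (2 * M₀ - t) ≤ ‖w₀ + t • v - N.mulVec (fun i => (c i : ℝ))‖ := by
    intro t c
    have h1 : ‖y - (w₀ + t • v)‖ = |M₀ - t| := by
      have h2 : y - (w₀ + t • v) = (M₀ - t) • v := by
        rw [sub_smul, ← hyw]; abel
      rw [h2, norm_smul, hvnorm, mul_one, Real.norm_eq_abs]
    have h3 : M₀ ≤ ‖y - N.mulVec (fun i => (c i : ℝ))‖ := hc₀ c
    have h4 : ‖y - N.mulVec (fun i => (c i : ℝ))‖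
        ≤ ‖y - (w₀ + t • v)‖ + ‖w₀ + t • v - N.mulVec (fun i => (c i : ℝ))‖ := by
      have := dist_triangle y (w₀ + t • v) (N.mulVec (fun i => (c i : ℝ)))
      simpa [dist_eq_norm] using this
    rcases abs_cases (M₀ - t) with ⟨he, _⟩ | ⟨he, _⟩
    · have hm : min t (2*M₀ - t) ≤ t := min_le_left _ _
      rw [h1, he] at h4; linarith
    · have hm : min t (2*M₀ - t) ≤ 2*M₀ - t := min_le_right _ _
      rw [h1, he] at h4; linarith
  -- the chain of balls along the segment
  set j : ℕ := ⌊h⌋₊ with hjdef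
  have hjle : (j : ℝ) ≤ h := Nat.floor_le hpos.le
  have hjlt : h < (j : ℝ) + 1 := Nat.lt_floor_add_one h
  have h2M : h < 2 * M₀ - 1 := by linarith
  set S : Set (ι → ℝ) := ⋃ i ∈ Finset.range (j + 1), Metric.ball (w₀ + (i : ℝ) • v) (1/2)
    with hS
  have hSmeas : MeasurableSet S :=
    (Finset.range (j+1)).measurableSet_biUnion fun i _ => measurableSet_ball
  have hballvol : ∀ i : ℕ, volume (Metric.ball (w₀ + (i:ℝ) • v) (1/2 : ℝ)) = 1 := by
    intro i
    rw [Real.volume_pi_ball _ (by norm_num : (0:ℝ) < 1/2)]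
    norm_num
  have hdisj : (↑(Finset.range (j+1)) : Set ℕ).PairwiseDisjoint
      (fun i : ℕ => Metric.ball (w₀ + (i:ℝ) • v) (1/2 : ℝ)) := by
    intro a _ b _ hab
    refine Set.disjoint_left.2 fun z hza hzb => ?_
    rw [Metric.mem_ball] at hza hzb
    have hcd : dist (w₀ + (a:ℝ) • v) (w₀ + (b:ℝ) • v) = |(a:ℝ) - (b:ℝ)| := by
      rw [dist_eq_norm]
      have : (w₀ + (a:ℝ) • v) - (w₀ + (b:ℝ) • v) = ((a:ℝ) - (b:ℝ)) • v := by
        rw [sub_smul]; abel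
      rw [this, norm_smul, hvnorm, mul_one, Real.norm_eq_abs]
    have hone : (1:ℝ) ≤ |(a:ℝ) - (b:ℝ)| := by
      have hne : (a:ℤ) - (b:ℤ) ≠ 0 := sub_ne_zero.2 (by exact_mod_cast hab)
      have := Int.one_le_abs hne
      have hcast : |(a:ℝ) - (b:ℝ)| = ((|(a:ℤ) - (b:ℤ)| : ℤ) : ℝ) := by push_cast; rfl
      rw [hcast]; exact_mod_cast this
    have htri := dist_triangle (w₀ + (a:ℝ) • v) z (w₀ + (b:ℝ) • v)
    rw [dist_comm (w₀ + (a:ℝ) • v) z, hcd] at htri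
    linarith
  have hSvol : volume S = (j + 1 : ℕ) := by
    rw [hS, measure_biUnion_finset hdisj fun i _ => measurableSet_ball]
    simp [hballvol]
  haveI : Countable L.toAddSubgroup := inferInstanceAs (Countable L)
  have hfund := ZSpan.isAddFundamentalDomain' bb volume
  have hFvol : volume (ZSpan.fundamentalDomain bb) = ENNReal.ofReal h := by
    rw [ZSpan.volume_fundamentalDomain]
    congr 1
    have hofbb : (Matrix.of ⇑bb) = N.transpose := by
      ext i jj
      rw [Matrix.of_apply, hbb i]
      simp [Matrix.transpose_apply]
    rw [hofbb, Matrix.det_transpose, hdet, abs_of_pos hpos]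
  have hlt : volume (ZSpan.fundamentalDomain bb) < volume S := by
    rw [hFvol, hSvol]
    calc ENNReal.ofReal h < ENNReal.ofReal ((j:ℝ) + 1) := by
          rw [ENNReal.ofReal_lt_ofReal_iff (by positivity)]; exact hjlt
      _ = ((j+1 : ℕ) : ℝ≥0∞) := by
          rw [← ENNReal.ofReal_natCast (j+1)]; push_cast; ring_nf
  obtain ⟨x₁, x₂, hxy, hnd⟩ :=
    exists_pair_mem_lattice_not_disjoint_vadd hfund hSmeas.nullMeasurableSet hlt
  rw [Set.not_disjoint_iff] at hnd
  obtain ⟨z, hz1, hz2⟩ := hnd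
  rw [Set.mem_vadd_set] at hz1 hz2
  obtain ⟨s₁, hs₁S, hs₁⟩ := hz1
  obtain ⟨s₂, hs₂S, hs₂⟩ := hz2
  simp only [hS, Set.mem_iUnion, exists_prop] at hs₁S hs₂S
  obtain ⟨i₁, hi₁, hb₁⟩ := hs₁S
  obtain ⟨i₂, hi₂, hb₂⟩ := hs₂S
  rw [Metric.mem_ball, dist_eq_norm] at hb₁ hb₂
  have hvadd1 : (x₁ : ι → ℝ) + s₁ = z := hs₁
  have hvadd2 : (x₂ : ι → ℝ) + s₂ = z := hs₂
  set d : ι → ℝ := (x₁ : ι → ℝ) - (x₂ : ι → ℝ) with hd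
  have hdL : d ∈ L := by
    have m1 : (x₁ : ι → ℝ) ∈ L := x₁.2
    have m2 : (x₂ : ι → ℝ) ∈ L := x₂.2
    exact Submodule.sub_mem L m1 m2
  have hdne : d ≠ 0 := by
    rw [hd, sub_ne_zero]
    exact fun hc => hxy (Subtype.ext hc)
  have hdeq : d = s₂ - s₁ := by
    have h5 : (x₁ : ι → ℝ) + s₁ = s₂ + (x₂ : ι → ℝ) :=
      (hvadd1.trans hvadd2.symm).trans (add_comm _ _)
    rw [hd, sub_eq_sub_iff_add_eq_add]
    exact h5
  have hdiff : ‖d - (((i₂:ℝ) - (i₁:ℝ)) • v)‖ < 1 := by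
    have he : d - (((i₂:ℝ) - (i₁:ℝ)) • v)
        = (s₂ - (w₀ + (i₂:ℝ) • v)) - (s₁ - (w₀ + (i₁:ℝ) • v)) := by
      rw [hdeq, sub_smul]; abel
    rw [he]
    calc ‖(s₂ - (w₀ + (i₂:ℝ) • v)) - (s₁ - (w₀ + (i₁:ℝ) • v))‖
        ≤ ‖s₂ - (w₀ + (i₂:ℝ) • v)‖ + ‖s₁ - (w₀ + (i₁:ℝ) • v)‖ := norm_sub_le _ _
      _ < 1 := by linarith
  have hkey : ∀ (a bn : ℕ), a < bn → (bn:ℝ) - (a:ℝ) ≤ (j:ℝ) → ∀ u : ι → ℝ, u ∈ L →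
      ‖(((bn:ℝ) - (a:ℝ)) • v) - u‖ < 1 → False := by
    intro a bn hab hbj u huL hlt1
    obtain ⟨cu, hcu⟩ := (hmem u).1 huL
    set t : ℝ := (bn:ℝ) - (a:ℝ) with ht
    have ht1 : 1 ≤ t := by
      have h6 : a + 1 ≤ bn := hab
      have h7 := (Nat.cast_le (α := ℝ)).2 h6
      push_cast at h7; linarith
    have ht2 : t < 2 * M₀ - 1 := lt_of_le_of_lt (hbj.trans hjle) h2M
    have happ := hseg t (c₀ + cu)
    have hNc : (N.mulVec fun i => ((c₀ + cu) i : ℝ)) = w₀ + u := by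
      have h8 : (fun i => ((c₀ + cu) i : ℝ)) = (fun i => (c₀ i : ℝ)) + (fun i => (cu i : ℝ)) := by
        funext i; simp
      rw [h8, Matrix.mulVec_add, ← hw₀, hcu]
    rw [hNc] at happ
    have h9 : w₀ + t • v - (w₀ + u) = t • v - u := by abel
    rw [h9] at happ
    have hmin1 : (1:ℝ) ≤ min t (2*M₀ - t) := le_min ht1 (by linarith)
    linarith
  have hi₂j : (i₂:ℝ) ≤ (j:ℝ) := by
    exact_mod_cast Nat.lt_succ_iff.1 (Finset.mem_range.1 hi₂)
  have hi₁j : (i₁:ℝ) ≤ (j:ℝ) := by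
    exact_mod_cast Nat.lt_succ_iff.1 (Finset.mem_range.1 hi₁)
  rcases lt_trichotomy i₁ i₂ with hlt12 | heq | hlt21
  · refine hkey i₁ i₂ hlt12 ?_ d hdL ?_
    · have : (0:ℝ) ≤ (i₁:ℝ) := Nat.cast_nonneg i₁
      linarith
    · rw [← norm_neg, neg_sub]; exact hdiff
  · obtain ⟨cd, hcd⟩ := (hmem d).1 hdL
    have hcdne : cd ≠ 0 := by
      intro h0
      apply hdne
      rw [← hcd, h0]
      have : (fun i => ((0 : ι → ℤ) i : ℝ)) = (0 : ι → ℝ) := by funext i; simp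
      rw [this, Matrix.mulVec_zero]
    have hge := hpack cd hcdne
    rw [hcd] at hge
    rw [heq] at hdiff
    simp only [sub_self, zero_smul, sub_zero] at hdiff
    linarith
  · refine hkey i₂ i₁ hlt21 ?_ (-d) (Submodule.neg_mem L hdL) ?_
    · have : (0:ℝ) ≤ (i₂:ℝ) := Nat.cast_nonneg i₂
      linarith
    · have hc : ((i₁:ℝ) - (i₂:ℝ)) = -((i₂:ℝ) - (i₁:ℝ)) := by ring
      rw [hc, neg_smul, sub_neg_eq_add, neg_add_eq_sub]
      exact hdiff

lemma intDist_le {k : ℕ} (x : Fin k → ℝ) (p : Fin k → ℤ) :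
    intDist x ≤ ‖x - (fun i => (p i : ℝ))‖ := by
  refine ciInf_le ⟨0, ?_⟩ p
  rintro r ⟨c, rfl⟩
  exact norm_nonneg _

lemma intDist_le_half {k : ℕ} (x : Fin k → ℝ) : intDist x ≤ 1/2 := by
  refine le_trans (intDist_le x (fun i => round (x i))) ?_
  rw [pi_norm_le_iff_of_nonneg (by norm_num : (0:ℝ) ≤ 1/2)]
  intro i
  simp only [Pi.sub_apply]
  rw [Real.norm_eq_abs]
  exact abs_sub_round (x i)

/-- Transference principle: if there is no nonzero `q ∈ ℤ^n` with `‖Aq‖_ℤ < C` and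
`‖q‖ < X`, then for every `b ∈ ℝ^m` there is `q ∈ ℤ^n` with `‖Aq - b‖_ℤ ≤ C₁` and
`‖q‖ ≤ X₁`, where `h = X^{-n} C^{-m}`, `C₁ = (h+1)C/2`, `X₁ = (h+1)X/2`. -/
theorem transference (m n : ℕ) (hm : 0 < m) (hn : 0 < n)
    (A : Matrix (Fin m) (Fin n) ℝ) (C X : ℝ) (hC : 0 < C) (hX : 0 < X)
    (hno : ¬ ∃ q : Fin n → ℤ,
      intDist (A.mulVec (fun j => (q j : ℝ))) < C ∧
      0 < ‖(fun j => (q j : ℝ))‖ ∧ ‖(fun j => (q j : ℝ))‖ < X) :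
    ∀ b : Fin m → ℝ, ∃ q : Fin n → ℤ,
      intDist (A.mulVec (fun j => (q j : ℝ)) - b) ≤
        (1 / 2) * (X ^ (-(n : ℤ)) * C ^ (-(m : ℤ)) + 1) * C ∧
      ‖(fun j => (q j : ℝ))‖ ≤ (1 / 2) * (X ^ (-(n : ℤ)) * C ^ (-(m : ℤ)) + 1) * X := by
  intro b
  set h' : ℝ := X ^ (-(n : ℤ)) * C ^ (-(m : ℤ)) with hh'
  have hh'pos : 0 < h' := by positivity
  rcases le_or_gt (1/2 : ℝ) ((1/2) * (h' + 1) * C) with hcase | hcase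
  · refine ⟨0, ?_, ?_⟩
    · have h0 : (fun j => (((0 : Fin n → ℤ) j : ℝ))) = (0 : Fin n → ℝ) := by funext j; simp
      rw [h0, Matrix.mulVec_zero, zero_sub]
      exact le_trans (intDist_le_half _) hcase
    · have h0 : (fun j => (((0 : Fin n → ℤ) j : ℝ))) = (0 : Fin n → ℝ) := by funext j; simp
      rw [h0, norm_zero]
      positivity
  · have hC1 : C < 1 := by nlinarith
    set N : Matrix (Fin m ⊕ Fin n) (Fin m ⊕ Fin n) ℝ :=
      Matrix.fromBlocks (C⁻¹ • 1) (C⁻¹ • A) 0 (X⁻¹ • 1) with hN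
    have hdet : N.det = C⁻¹ ^ m * X⁻¹ ^ n := by
      rw [hN, Matrix.det_fromBlocks_zero₂₁, Matrix.det_smul, Matrix.det_smul, Matrix.det_one,
        Matrix.det_one]
      simp [Fintype.card_fin]
    have hh'eq : h' = C⁻¹ ^ m * X⁻¹ ^ n := by
      rw [hh', zpow_neg, zpow_neg, zpow_natCast, zpow_natCast, inv_pow, inv_pow]; ring
    have hmv : ∀ w : (Fin m) ⊕ (Fin n) → ℝ,
        N.mulVec w = Sum.elim (C⁻¹ • ((w ∘ Sum.inl) + A.mulVec (w ∘ Sum.inr)))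
          (X⁻¹ • (w ∘ Sum.inr)) := by
      intro w
      conv_lhs => rw [← Sum.elim_comp_inl_inr w]
      rw [hN, Matrix.fromBlocks_mulVec, Matrix.smul_mulVec, Matrix.smul_mulVec,
        Matrix.smul_mulVec, Matrix.one_mulVec, Matrix.one_mulVec, Matrix.zero_mulVec,
        zero_add, ← smul_add]
      simp [Sum.elim_comp_inl, Sum.elim_comp_inr]
    have hpack : ∀ c : (Fin m) ⊕ (Fin n) → ℤ, c ≠ 0 →
        1 ≤ ‖N.mulVec (fun i => (c i : ℝ))‖ := by
      intro c hc
      by_contra hlt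
      push_neg at hlt
      rw [pi_norm_lt_iff one_pos] at hlt
      set p : Fin m → ℤ := fun i => c (Sum.inl i) with hp
      set q : Fin n → ℤ := fun j => c (Sum.inr j) with hq
      have hinl : ∀ i, |((p i : ℝ)) + A.mulVec (fun j => (q j : ℝ)) i| < C := by
        intro i
        have h1 := hlt (Sum.inl i)
        rw [hmv] at h1
        simp only [Sum.elim_inl, Pi.smul_apply, Pi.add_apply, Function.comp_apply,
          smul_eq_mul, Real.norm_eq_abs, abs_mul, abs_of_pos (inv_pos.2 hC)] at h1
        have hcomp : ((fun i => ((c i : ℝ))) ∘ Sum.inr) = (fun j => ((q j : ℝ))) := rfl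
        have hpc : ((c (Sum.inl i) : ℝ)) = ((p i : ℝ)) := rfl
        rw [hcomp, hpc, inv_mul_eq_div, div_lt_one hC] at h1
        exact h1
      have hinr : ∀ j, |(q j : ℝ)| < X := by
        intro j
        have h1 := hlt (Sum.inr j)
        rw [hmv] at h1
        simp only [Sum.elim_inr, Pi.smul_apply, Function.comp_apply, smul_eq_mul,
          Real.norm_eq_abs, abs_mul, abs_of_pos (inv_pos.2 hX)] at h1
        have hqc : ((c (Sum.inr j) : ℝ)) = ((q j : ℝ)) := rfl
        rw [hqc, inv_mul_eq_div, div_lt_one hX] at h1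
        exact h1
      by_cases hq0 : q = 0
      · have hp0 : p ≠ 0 := by
          intro hp0
          apply hc
          funext i
          cases i with
          | inl i => exact congrFun hp0 i
          | inr j => exact congrFun hq0 j
        obtain ⟨i, hi⟩ := Function.ne_iff.1 hp0
        have h1 : (1:ℝ) ≤ |(p i : ℝ)| := by exact_mod_cast Int.one_le_abs hi
        have h2 := hinl i
        have h3 : (fun j => ((q j : ℝ))) = (0 : Fin n → ℝ) := by
          funext j; rw [hq0]; simp
        rw [h3, Matrix.mulVec_zero] at h2
        simp only [Pi.zero_apply, add_zero] at h2
        linarith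
      · apply hno
        refine ⟨q, ?_, ?_, ?_⟩
        · refine lt_of_le_of_lt (intDist_le _ (fun i => -(p i))) ?_
          rw [pi_norm_lt_iff hC]
          intro i
          simp only [Pi.sub_apply]
          rw [Real.norm_eq_abs]
          have h2 := hinl i
          have h4 : A.mulVec (fun j => (q j : ℝ)) i - ((-(p i) : ℤ) : ℝ)
              = (p i : ℝ) + A.mulVec (fun j => (q j : ℝ)) i := by push_cast; ring
          rw [h4]
          exact h2
        · obtain ⟨j, hj⟩ := Function.ne_iff.1 hq0
          have h1 : (1:ℝ) ≤ |(q j : ℝ)| := by exact_mod_cast Int.one_le_abs hj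
          have h3 := norm_le_pi_norm (fun j => (q j : ℝ)) j
          rw [Real.norm_eq_abs] at h3
          linarith
        · rw [pi_norm_lt_iff hX]
          intro j
          rw [Real.norm_eq_abs]
          exact hinr j
    set y : (Fin m ⊕ Fin n) → ℝ := Sum.elim (fun i => C⁻¹ * b i) (fun _ => 0) with hy
    obtain ⟨c, hcbound⟩ := covering_of_packing N (C⁻¹ ^ m * X⁻¹ ^ n) (by positivity)
      hdet hpack y
    rw [← hh'eq] at hcbound
    set q : Fin n → ℤ := fun j => c (Sum.inr j) with hqdef
    set p : Fin m → ℤ := fun i => c (Sum.inl i) with hpdef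
    have hcoord : ∀ idx, ‖(y - N.mulVec (fun i => (c i : ℝ))) idx‖ ≤ (h' + 1)/2 :=
      fun idx => le_trans (norm_le_pi_norm _ idx) hcbound
    refine ⟨q, ?_, ?_⟩
    · refine le_trans (intDist_le _ (fun i => -(p i))) ?_
      rw [pi_norm_le_iff_of_nonneg (by positivity)]
      intro i
      have h2 := hcoord (Sum.inl i)
      simp only [Pi.sub_apply] at h2
      rw [hmv] at h2
      simp only [hy, Sum.elim_inl, Pi.smul_apply, Pi.add_apply, Function.comp_apply,
        smul_eq_mul, Real.norm_eq_abs] at h2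
      have hcomp : ((fun i => ((c i : ℝ))) ∘ Sum.inr) = (fun j => ((q j : ℝ))) := rfl
      rw [hcomp] at h2
      have h3 : C⁻¹ * b i - C⁻¹ * ((c (Sum.inl i) : ℝ)
          + A.mulVec (fun j => (q j : ℝ)) i)
          = C⁻¹ * (b i - (p i : ℝ) - A.mulVec (fun j => (q j : ℝ)) i) := by
        rw [hpdef]; ring
      rw [h3, abs_mul, abs_of_pos (inv_pos.2 hC), inv_mul_eq_div, div_le_iff₀ hC] at h2
      simp only [Pi.sub_apply]
      rw [Real.norm_eq_abs]
      have habs := abs_le.1 h2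
      apply abs_le.2
      constructor
      · push_cast
        linarith [habs.1, habs.2]
      · push_cast
        linarith [habs.1, habs.2]
    · rw [pi_norm_le_iff_of_nonneg (by positivity)]
      intro j
      have h2 := hcoord (Sum.inr j)
      simp only [Pi.sub_apply] at h2
      rw [hmv] at h2
      simp only [hy, Sum.elim_inr, Pi.smul_apply, Function.comp_apply, smul_eq_mul,
        Real.norm_eq_abs, zero_sub, abs_neg, abs_mul, abs_of_pos (inv_pos.2 hX)] at h2
      have hqc : ((c (Sum.inr j) : ℝ)) = ((q j : ℝ)) := rfl
      rw [hqc, inv_mul_eq_div, div_le_iff₀ hX] at h2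
      rw [Real.norm_eq_abs]
      calc |(q j : ℝ)| ≤ (h' + 1)/2 * X := h2
        _ = 1/2 * (h' + 1) * X := by ring
end

section
/- Let m, n be positive integers and A ∈ M_{m,n}(ℝ). For any b ∈ ℝ^m, y ∈ ℤ^m and q ∈ ℤ^n, one has ‖b·y‖_ℤ ≤ m ‖y‖ ‖Aq − b‖_ℤ + n ‖q‖ ‖(^tA) y‖_ℤ. -/
open MeasureTheory Filter

/-- Distance from a real number to the nearest integer. -/
noncomputable def intDistR (t : ℝ) : ℝ := ⨅ p : ℤ, |t - (p : ℝ)|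

lemma intDist_bdd {k : ℕ} (x : Fin k → ℝ) :
    BddBelow (Set.range fun p : Fin k → ℤ => ‖x - (fun i => (p i : ℝ))‖) := by
  refine ⟨0, ?_⟩
  rintro _ ⟨p, rfl⟩
  exact norm_nonneg _

/-- For any `b ∈ ℝ^m`, `y ∈ ℤ^m` and `q ∈ ℤ^n`:
`‖b·y‖_ℤ ≤ m ‖y‖ ‖Aq - b‖_ℤ + n ‖q‖ ‖ᵗA y‖_ℤ`. -/
theorem intDist_inner_le (m n : ℕ) (hm : 0 < m) (hn : 0 < n)
    (A : Matrix (Fin m) (Fin n) ℝ)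
    (b : Fin m → ℝ) (y : Fin m → ℤ) (q : Fin n → ℤ) :
    intDistR (∑ i, b i * (y i : ℝ)) ≤
      m * ‖(fun i => (y i : ℝ))‖ * intDist (A.mulVec (fun j => (q j : ℝ)) - b) +
      n * ‖(fun j => (q j : ℝ))‖ * intDist (A.transpose.mulVec (fun i => (y i : ℝ))) := by
  set yc : Fin m → ℝ := fun i => (y i : ℝ) with hyc
  set qc : Fin n → ℝ := fun j => (q j : ℝ) with hqc
  set x : Fin m → ℝ := A.mulVec qc - b with hx
  set w : Fin n → ℝ := A.transpose.mulVec yc with hw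
  have hc1 : (0:ℝ) ≤ m * ‖yc‖ := by positivity
  have hc2 : (0:ℝ) ≤ n * ‖qc‖ := by positivity
  rw [intDist, intDist, Real.mul_iInf_of_nonneg hc1, Real.mul_iInf_of_nonneg hc2]
  refine le_ciInf_add_ciInf fun p r => ?_
  -- the approximating integer
  have hbdd : BddBelow (Set.range fun p : ℤ => |(∑ i, b i * yc i) - (p : ℝ)|) := by
    refine ⟨0, ?_⟩; rintro _ ⟨p, rfl⟩; exact abs_nonneg _
  have h1 : intDistR (∑ i, b i * yc i) ≤
      |(∑ i, b i * yc i) - (((∑ j, q j * r j) - ∑ i, p i * y i : ℤ) : ℝ)| :=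
    ciInf_le hbdd _
  refine h1.trans ?_
  have key : (∑ i, b i * yc i) - (((∑ j, q j * r j) - ∑ i, p i * y i : ℤ) : ℝ)
      = (∑ j, qc j * (w j - (r j : ℝ))) + ∑ i, ((p i : ℝ) - x i) * yc i := by
    push_cast
    simp only [hx, hw, hyc, hqc, Matrix.mulVec, dotProduct, Matrix.transpose_apply,
      Pi.sub_apply, Finset.mul_sum, Finset.sum_sub_distrib, sub_mul, mul_sub]
    rw [Finset.sum_comm]
    have hdd : ∑ i : Fin m, (∑ j : Fin n, A i j * (q j : ℝ)) * (y i : ℝ)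
        = ∑ i : Fin m, ∑ j : Fin n, (q j : ℝ) * A i j * (y i : ℝ) :=
      Finset.sum_congr rfl fun i _ => by
        rw [Finset.sum_mul]; exact Finset.sum_congr rfl fun j _ => by ring
    ring_nf
    ring_nf at hdd
    rw [hdd]
    abel
  rw [key]
  have habs : |(∑ j, qc j * (w j - (r j : ℝ))) + ∑ i, ((p i : ℝ) - x i) * yc i|
      ≤ (∑ j, |qc j| * |w j - (r j : ℝ)|) + ∑ i, |(p i : ℝ) - x i| * |yc i| := by
    refine (abs_add_le _ _).trans (add_le_add ?_ ?_)
    · exact (Finset.abs_sum_le_sum_abs _ _).trans (le_of_eq (by simp [abs_mul]))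
    · exact (Finset.abs_sum_le_sum_abs _ _).trans (le_of_eq (by simp [abs_mul]))
  refine habs.trans ?_
  rw [add_comm]
  refine add_le_add ?_ ?_
  · -- ∑ i ≤ m * ‖yc‖ * ‖x - pc‖
    have : ∀ i, |(p i : ℝ) - x i| * |yc i| ≤ ‖x - (fun i => (p i : ℝ))‖ * ‖yc‖ := by
      intro i
      refine mul_le_mul ?_ ?_ (abs_nonneg _) (norm_nonneg _)
      · have := norm_le_pi_norm (x - fun i => (p i : ℝ)) i
        simpa [Real.norm_eq_abs, abs_sub_comm] using this
      · simpa [Real.norm_eq_abs] using norm_le_pi_norm yc i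
    calc ∑ i, |(p i : ℝ) - x i| * |yc i|
        ≤ ∑ _i : Fin m, ‖x - (fun i => (p i : ℝ))‖ * ‖yc‖ :=
          Finset.sum_le_sum fun i _ => this i
      _ = m * ‖yc‖ * ‖x - (fun i => (p i : ℝ))‖ := by
          simp [Finset.sum_const]; ring
  · have : ∀ j, |qc j| * |w j - (r j : ℝ)| ≤ ‖qc‖ * ‖w - (fun j => (r j : ℝ))‖ := by
      intro j
      refine mul_le_mul ?_ ?_ (abs_nonneg _) (norm_nonneg _)
      · simpa [Real.norm_eq_abs] using norm_le_pi_norm qc j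
      · simpa [Real.norm_eq_abs] using norm_le_pi_norm (w - fun j => (r j : ℝ)) j
    calc ∑ j, |qc j| * |w j - (r j : ℝ)|
        ≤ ∑ _j : Fin n, ‖qc‖ * ‖w - (fun j => (r j : ℝ))‖ :=
          Finset.sum_le_sum fun j _ => this j
      _ = n * ‖qc‖ * ‖w - (fun j => (r j : ℝ))‖ := by
          simp [Finset.sum_const]; ring
end

section
/- Let m, n be positive integers, A ∈ M_{m,n}(ℝ), and let (y_k)_{k≥1} be a sequence of nonzero vectors in ℤ^m with Y_k = ‖y_k‖ strictly increasing and Y_k → ∞, and M_k = ‖(^tA) y_k‖_ℤ. If Y_{k+1}^{m/n} M_k → 0 as k → ∞ (in particular, if ∑_{k≥2} max((Y_k^{m/n} M_{k-1})^{n/(m+n)}, (Y_{k+1}^{m/n} M_k)^{n/(m+n)}) < ∞), then ^tA is singular; that is, for every ε > 0 and all sufficiently large X ≥ 1 there exists y ∈ ℤ^m with ‖(^tA) y‖_ℤ < ε X^{−m/n} and 0 < ‖y‖ < X. -/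
open MeasureTheory Filter

/-- If `(y_k)` are nonzero integer vectors with `Y_k = ‖y_k‖` strictly increasing to
infinity, `M_k = ‖ᵗA y_k‖_ℤ`, and `Y_{k+1}^{m/n} M_k → 0`, then `ᵗA` is singular:
for every `ε > 0` and all sufficiently large `X ≥ 1` there is `y ∈ ℤ^m` with
`‖ᵗA y‖_ℤ < ε X^{-m/n}` and `0 < ‖y‖ < X`. -/
theorem transpose_singular (m n : ℕ) (hm : 0 < m) (hn : 0 < n)
    (A : Matrix (Fin m) (Fin n) ℝ)
    (y : ℕ → (Fin m → ℤ)) (hy : ∀ k, y k ≠ 0)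
    (Y M : ℕ → ℝ)
    (hY : ∀ k, Y k = ‖(fun i => (y k i : ℝ))‖)
    (hM : ∀ k, M k = intDist (A.transpose.mulVec (fun i => (y k i : ℝ))))
    (hYmono : StrictMono Y) (hYtop : Tendsto Y atTop atTop)
    (hlim : Tendsto (fun k : ℕ => Y (k + 1) ^ ((m : ℝ) / n) * M k) atTop (nhds 0)) :
    ∀ ε : ℝ, 0 < ε → ∃ X₀ : ℝ, 1 ≤ X₀ ∧ ∀ X : ℝ, X₀ ≤ X →
      ∃ z : Fin m → ℤ,
        intDist (A.transpose.mulVec (fun i => (z i : ℝ))) < ε * X ^ (-(m : ℝ) / n) ∧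
        0 < ‖(fun i => (z i : ℝ))‖ ∧ ‖(fun i => (z i : ℝ))‖ < X := by
  classical
  intro ε hε
  have hYnonneg : ∀ k, 0 ≤ Y k := fun k => (hY k) ▸ norm_nonneg _
  have hMnonneg : ∀ k, 0 ≤ M k := fun k => (hM k) ▸ intDist_nonneg _
  -- choose K so that for k ≥ K the product is < ε
  have hev : ∀ᶠ k in atTop, Y (k + 1) ^ ((m : ℝ) / n) * M k < ε := by
    have := hlim.eventually (gt_mem_nhds hε)
    exact this
  obtain ⟨K, hK⟩ := hev.exists_forall_of_atTop
  refine ⟨max 1 (Y K + 1), le_max_left _ _, fun X hX => ?_⟩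
  have hX1 : (1 : ℝ) ≤ X := le_trans (le_max_left _ _) hX
  have hXpos : 0 < X := lt_of_lt_of_le one_pos hX1
  have hYKX : Y K < X := by
    have : Y K + 1 ≤ X := le_trans (le_max_right _ _) hX
    linarith
  -- find k ≥ K with Y k < X ≤ Y (k+1)
  obtain ⟨N, hN⟩ := (hYtop.eventually_ge_atTop X).exists_forall_of_atTop
  have hT : ∃ j, X ≤ Y j := ⟨N, hN N le_rfl⟩
  set j₀ := Nat.find hT with hj₀
  have hj₀spec : X ≤ Y j₀ := Nat.find_spec hT
  have hj₀gt : K < j₀ := by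
    by_contra h
    push_neg at h
    have : Y j₀ ≤ Y K := hYmono.monotone h
    linarith
  set k := j₀ - 1 with hk
  have hkk : k + 1 = j₀ := Nat.succ_pred_eq_of_pos (Nat.lt_of_le_of_lt (Nat.zero_le _) hj₀gt)
  have hkK : K ≤ k := by omega
  have hYkX : Y k < X := by
    have : k < j₀ := by omega
    have := Nat.find_min hT this
    push_neg at this
    exact this
  refine ⟨y k, ?_, ?_, ?_⟩
  · rw [← hM k]
    have hprod : Y (k + 1) ^ ((m : ℝ) / n) * M k < ε := hK k hkK
    have hXle : X ^ ((m : ℝ) / n) ≤ Y (k + 1) ^ ((m : ℝ) / n) := by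
      apply Real.rpow_le_rpow (le_of_lt hXpos) (hkk ▸ hj₀spec)
      positivity
    have hXmpos : 0 < X ^ ((m : ℝ) / n) := Real.rpow_pos_of_pos hXpos _
    have h1 : X ^ ((m : ℝ) / n) * M k < ε :=
      lt_of_le_of_lt (mul_le_mul_of_nonneg_right hXle (hMnonneg k)) hprod
    have hneg : X ^ (-(m : ℝ) / n) = (X ^ ((m : ℝ) / n))⁻¹ := by
      rw [neg_div, Real.rpow_neg (le_of_lt hXpos)]
    rw [hneg, lt_mul_inv_iff₀ hXmpos, mul_comm]
    exact h1
  · rw [norm_pos_iff]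
    intro h
    apply hy k
    funext i
    have := congrFun h i
    simpa using this
  · exact (hY k) ▸ hYkX
end
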